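/- arXiv:math/0602574 — 3 statements merged into one kernel-verified Lean document; each statement's English description precedes it below -/
import Mathlib

section
/- Homeomorphism extension via brick partitions: Let $X$ and $Y$ be complete metric spaces, and let $\mathcal{F}_k$ and $\mathcal{G}_k$ ($k\ge 1$) be sequences of locally finite closed covers of $X$ and $Y$ respectively, with $\mathcal{F}_k$ isomorphic to $\mathcal{G}_k$ for each $k$ (same index set $I_k$, same intersection pattern). Suppose there are index maps $f_k: I_k \to I_{k-1}$ and an integer $m$ such that for all $k$: $\mathcal{F}_{2k+1} \prec_{f_{2k+1}} \mathrm{st}^m\mathcal{F}_{2k} \prec_{f_{2k}} \mathcal{F}_{2k-1}$ and $\mathrm{st}^m\mathcal{G}_{2k+1} \prec_{f_{2k+1}} \mathcal{G}_{2k} \prec_{f_{2k}} \mathrm{st}^m\mathcal{G}_{2k-1}$. If the meshes of $\mathcal{F}_k$ and $\mathcal{G}_k$ tend to zero, then there exists a unique homeomorphism from $X$ onto $Y$ mapping each element of $\mathcal{F}_k$ into the corresponding element of $\mathrm{st}^{m+1}\mathcal{G}_k$, for all $k$. -/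
open Set ContinuousMap
open scoped ENNReal

namespace NobelingPaper

/-! Stars of indexed collections of sets. -/

/-- The star of a set `A` in an indexed collection `F`: the union of `A` with all
elements of `F` that intersect `A`. -/
def starSet {X ι : Type} (F : ι → Set X) (A : Set X) : Set X :=
  A ∪ ⋃ i ∈ {i | (F i ∩ A).Nonempty}, F i

/-- The star of the collection `F` in the collection `H`. -/
def starIn {X ι κ : Type} (H : κ → Set X) (F : ι → Set X) : ι → Set X :=
  fun i => starSet H (F i)

/-- The `k`-th star of `F` in `H`. -/
def starInPow {X ι κ : Type} (H : κ → Set X) (F : ι → Set X) : ℕ → ι → Set X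
  | 0 => F
  | k + 1 => starIn H (starInPow H F k)

/-- The `m`-th star of a collection: `st^m F = st_F (st^(m-1) F)`. -/
def starPow {X ι : Type} (F : ι → Set X) : ℕ → ι → Set X
  | 0 => F
  | m + 1 => starIn F (starPow F m)

variable {Z Z' ι : Type}

lemma subset_starSet (H : ι → Set Z) (A : Set Z) : A ⊆ starSet H A := subset_union_left

lemma starSet_mono (H : ι → Set Z) {A B : Set Z} (h : A ⊆ B) : starSet H A ⊆ starSet H B := by
  rintro z (hz | hz)
  · exact Or.inl (h hz)
  · right
    simp only [mem_iUnion, mem_setOf_eq] at hz ⊢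
    obtain ⟨i, ⟨w, hw1, hw2⟩, hz⟩ := hz
    exact ⟨i, ⟨w, hw1, h hw2⟩, hz⟩

lemma subset_starSet_of_inter (H : ι → Set Z) {A : Set Z} {i : ι} (h : (H i ∩ A).Nonempty) :
    H i ⊆ starSet H A := by
  intro z hz
  right
  simp only [mem_iUnion, mem_setOf_eq]
  exact ⟨i, h, hz⟩

lemma iter_mono (H : ι → Set Z) {A B : Set Z} (h : A ⊆ B) (r : ℕ) :
    (starSet H)^[r] A ⊆ (starSet H)^[r] B := by
  induction r with
  | zero => exact h
  | succ r ih =>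
    rw [Function.iterate_succ_apply', Function.iterate_succ_apply']
    exact starSet_mono H ih

lemma subset_iter (H : ι → Set Z) (A : Set Z) (r : ℕ) : A ⊆ (starSet H)^[r] A := by
  induction r with
  | zero => exact subset_rfl
  | succ r ih =>
    rw [Function.iterate_succ_apply']
    exact ih.trans (subset_starSet H _)

lemma iter_le_iter (H : ι → Set Z) (A : Set Z) {r r' : ℕ} (h : r ≤ r') :
    (starSet H)^[r] A ⊆ (starSet H)^[r'] A := by
  obtain ⟨d, rfl⟩ := Nat.exists_eq_add_of_le h
  rw [Nat.add_comm, Function.iterate_add_apply]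
  exact subset_iter H _ d

/-- workhorse: from `A ⊆ S^[u] B` conclude `S^[s] A ⊆ S^[t] B` when `s + u ≤ t`. -/
lemma iter_subset_iter_of_subset (H : ι → Set Z) {A B : Set Z} {u : ℕ}
    (h : A ⊆ (starSet H)^[u] B) {s t : ℕ} (hst : s + u ≤ t) :
    (starSet H)^[s] A ⊆ (starSet H)^[t] B := by
  have h1 : (starSet H)^[s] A ⊆ (starSet H)^[s] ((starSet H)^[u] B) := iter_mono H h s
  rw [← Function.iterate_add_apply] at h1
  exact h1.trans (iter_le_iter H B hst)

lemma starPow_eq (H : ι → Set Z) (r : ℕ) (i : ι) :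
    starPow H r i = (starSet H)^[r] (H i) := by
  induction r with
  | zero => rfl
  | succ r ih =>
    show starSet H (starPow H r i) = _
    rw [ih, Function.iterate_succ_apply']

/-- chain extraction -/
lemma exists_chain_of_mem_iter (H : ι → Set Z) {b : ι} :
    ∀ (r : ℕ) (y : Z), y ∈ (starSet H)^[r] (H b) →
    ∃ c : ℕ → ι, c 0 = b ∧ y ∈ H (c r) ∧ ∀ u < r, (H (c u) ∩ H (c (u + 1))).Nonempty := by
  intro r
  induction r with
  | zero => exact fun y hy => ⟨fun _ => b, rfl, hy, by omega⟩
  | succ r ih =>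
    intro y
    rw [Function.iterate_succ_apply']
    rintro (hy | hy)
    · obtain ⟨c, hc0, hcr, hlink⟩ := ih y hy
      refine ⟨fun u => c (min u r), by simpa using hc0, ?_, ?_⟩
      · show y ∈ H (c (min (r + 1) r))
        rwa [min_eq_right (by omega : r ≤ r + 1)]
      · intro u hu
        show (H (c (min u r)) ∩ H (c (min (u + 1) r))).Nonempty
        rcases Nat.lt_or_ge u r with h | h
        · rw [min_eq_left (by omega : u ≤ r), min_eq_left (by omega : u + 1 ≤ r)]
          exact hlink u h
        · have hur : u = r := by omega
          subst hur
          rw [min_self, min_eq_right (by omega : u ≤ u + 1)]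
          exact ⟨y, hcr, hcr⟩
    · simp only [mem_iUnion, mem_setOf_eq] at hy
      obtain ⟨e, ⟨z, hze, hz⟩, hy⟩ := hy
      obtain ⟨c, hc0, hcr, hlink⟩ := ih z hz
      refine ⟨fun u => if u ≤ r then c u else e, by simp [hc0], by simpa using hy, ?_⟩
      intro u hu
      show (H (if u ≤ r then c u else e) ∩ H (if u + 1 ≤ r then c (u + 1) else e)).Nonempty
      rcases Nat.lt_or_ge u r with h | h
      · rw [if_pos (by omega : u ≤ r), if_pos (by omega : u + 1 ≤ r)]
        exact hlink u h
      · have hur : u = r := by omega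
        subst hur
        rw [if_pos (le_refl u), if_neg (by omega : ¬ u + 1 ≤ u)]
        exact ⟨z, hcr, hze⟩

/-- chain rebuilding -/
lemma chain_subset_iter (H : ι → Set Z) {b : ι} {c : ℕ → ι} (hc0 : c 0 = b) :
    ∀ r : ℕ, (∀ u < r, (H (c u) ∩ H (c (u + 1))).Nonempty) →
    H (c r) ⊆ (starSet H)^[r] (H b) := by
  intro r
  induction r with
  | zero => intro _; rw [Function.iterate_zero_apply, hc0]
  | succ r ih =>
    intro hlink
    rw [Function.iterate_succ_apply']
    have h1 : H (c r) ⊆ (starSet H)^[r] (H b) := ih fun u hu => hlink u (by omega)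
    obtain ⟨z, hz1, hz2⟩ := hlink r (by omega)
    exact subset_starSet_of_inter H ⟨z, hz2, h1 hz1⟩

/-- master transfer lemma. -/
lemma master (H : ι → Set Z) (H' : ι → Set Z') {b b' : ι} {r r' : ℕ}
    (hne : ((starSet H)^[r] (H b) ∩ (starSet H)^[r'] (H b')).Nonempty)
    (htr : ∀ u v : ι, (H u ∩ H v).Nonempty → (H' u ∩ H' v).Nonempty) :
    H' b' ⊆ (starSet H')^[r + r' + 1] (H' b) := by
  classical
  obtain ⟨z, hz1, hz2⟩ := hne
  obtain ⟨c, hc0, hcr, hlink⟩ := exists_chain_of_mem_iter H r z hz1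
  obtain ⟨c', hc'0, hc'r, hlink'⟩ := exists_chain_of_mem_iter H r' z hz2
  have key := chain_subset_iter H'
    (c := fun u => if u ≤ r then c u else c' (r + r' + 1 - u)) (b := b)
    (by simp [hc0]) (r + r' + 1) ?_
  · have hR : (if r + r' + 1 ≤ r then c (r + r' + 1) else c' (r + r' + 1 - (r + r' + 1))) = b' := by
      rw [if_neg (by omega : ¬ r + r' + 1 ≤ r), Nat.sub_self, hc'0]
    rwa [hR] at key
  · intro u hu
    apply htr
    show (H (if u ≤ r then c u else c' (r + r' + 1 - u)) ∩
      H (if u + 1 ≤ r then c (u + 1) else c' (r + r' + 1 - (u + 1)))).Nonempty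
    rcases Nat.lt_or_ge u r with h | h
    · rw [if_pos (by omega : u ≤ r), if_pos (by omega : u + 1 ≤ r)]
      exact hlink u h
    rcases Nat.eq_or_lt_of_le h with h' | h'
    · have hur : u = r := h'.symm
      subst hur
      rw [if_pos (le_refl u), if_neg (by omega : ¬ u + 1 ≤ u)]
      have hv : u + r' + 1 - (u + 1) = r' := by omega
      rw [hv]
      exact ⟨z, hcr, hc'r⟩
    · rw [if_neg (by omega : ¬ u ≤ r), if_neg (by omega : ¬ u + 1 ≤ r)]
      have hv : r + r' + 1 - u = (r + r' + 1 - (u + 1)) + 1 := by omega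
      rw [hv]
      exact (hlink' (r + r' + 1 - (u + 1)) (by omega)).imp fun w hw => ⟨hw.2, hw.1⟩

/-- closedness of iterated stars -/
lemma isClosed_starSet (H : ι → Set Z) [MetricSpace Z] (hH : ∀ i, IsClosed (H i))
    (hlf : LocallyFinite H) {A : Set Z} (hA : IsClosed A) : IsClosed (starSet H A) := by
  apply hA.union
  have : (⋃ i ∈ {i | (H i ∩ A).Nonempty}, H i) = ⋃ i : {i | (H i ∩ A).Nonempty}, H i :=
    (Set.biUnion_eq_iUnion _ _)
  rw [this]
  exact (hlf.comp_injective Subtype.coe_injective).isClosed_iUnion fun i => hH i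

lemma isClosed_iter (H : ι → Set Z) [MetricSpace Z] (hH : ∀ i, IsClosed (H i))
    (hlf : LocallyFinite H) {A : Set Z} (hA : IsClosed A) (r : ℕ) :
    IsClosed ((starSet H)^[r] A) := by
  induction r with
  | zero => exact hA
  | succ r ih =>
    rw [Function.iterate_succ_apply']
    exact isClosed_starSet H hH hlf ih

/-- diameter of iterated stars -/
lemma diam_starSet_le (H : ι → Set Z) [MetricSpace Z] {ε : ℝ≥0∞}
    (hH : ∀ i, EMetric.diam (H i) ≤ ε) (A : Set Z) :
    EMetric.diam (starSet H A) ≤ EMetric.diam A + 2 * ε := by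
  apply EMetric.diam_le
  intro u hu v hv
  have key : ∀ w, w ∈ starSet H A → ∃ p ∈ A, edist w p ≤ ε := by
    rintro w (hw | hw)
    · exact ⟨w, hw, by simp⟩
    · simp only [mem_iUnion, mem_setOf_eq] at hw
      obtain ⟨i, ⟨p, hp1, hp2⟩, hw⟩ := hw
      exact ⟨p, hp2, (EMetric.edist_le_diam_of_mem hw hp1).trans (hH i)⟩
  obtain ⟨p, hp, hup⟩ := key u hu
  obtain ⟨q, hq, hvq⟩ := key v hv
  calc edist u v ≤ edist u p + edist p q + edist q v := edist_triangle4 u p q v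
    _ ≤ ε + EMetric.diam A + ε := by
        gcongr
        · exact EMetric.edist_le_diam_of_mem hp hq
        · rw [edist_comm]; exact hvq
    _ = EMetric.diam A + 2 * ε := by ring

lemma diam_iter_le (H : ι → Set Z) [MetricSpace Z] {ε : ℝ≥0∞}
    (hH : ∀ i, EMetric.diam (H i) ≤ ε) (b : ι) (r : ℕ) :
    EMetric.diam ((starSet H)^[r] (H b)) ≤ (2 * r + 1 : ℕ) * ε := by
  induction r with
  | zero => simpa using hH b
  | succ r ih =>
    rw [Function.iterate_succ_apply']
    calc EMetric.diam (starSet H ((starSet H)^[r] (H b)))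
        ≤ EMetric.diam ((starSet H)^[r] (H b)) + 2 * ε := diam_starSet_le H hH _
      _ ≤ (2 * r + 1 : ℕ) * ε + 2 * ε := by gcongr
      _ = (2 * (r + 1) + 1 : ℕ) * ε := by push_cast; ring

lemma aux_delta (c : ℕ) {ε : ℝ≥0∞} (hε : 0 < ε) :
    ∃ δ : ℝ≥0∞, 0 < δ ∧ (c : ℝ≥0∞) * δ < ε := by
  set η := min ε 1 with hη
  have hη0 : 0 < η := lt_min hε one_pos
  have hηtop : η ≠ ⊤ := ne_top_of_le_ne_top ENNReal.one_ne_top (min_le_right _ _)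
  have hc0 : ((c : ℝ≥0∞) + 1) ≠ 0 := by simp
  have hctop : ((c : ℝ≥0∞) + 1) ≠ ⊤ := by finiteness
  refine ⟨η / (2 * (c + 1)), ENNReal.div_pos hη0.ne' (by finiteness), ?_⟩
  have h1 : (c : ℝ≥0∞) * (η / (2 * (c + 1))) ≤ ((c : ℝ≥0∞) + 1) * η / (2 * ((c : ℝ≥0∞) + 1)) := by
    rw [mul_div_assoc]
    gcongr
    exact le_self_add
  have h2 : ((c : ℝ≥0∞) + 1) * η / (2 * ((c : ℝ≥0∞) + 1)) = η / 2 := by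
    rw [mul_comm 2 ((c : ℝ≥0∞) + 1)]
    exact ENNReal.mul_div_mul_left η 2 hc0 hctop
  calc (c : ℝ≥0∞) * (η / (2 * (c + 1))) ≤ η / 2 := h1.trans_eq h2
    _ < η := ENNReal.half_lt_self hη0.ne' hηtop
    _ ≤ ε := min_le_left _ _

def desc {J : ℕ → Type} (ψ : ∀ n, J (n + 1) → J n) : ∀ (d n : ℕ), J (n + d) → J n
  | 0, _, j => j
  | d + 1, n, j => desc ψ d n (ψ (n + d) j)

lemma construct {X Y : Type} [MetricSpace X] [MetricSpace Y] [CompleteSpace Y]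
    (J : ℕ → Type) (A : ∀ n, J n → Set X) (B : ∀ n, J n → Set Y)
    (ψ : ∀ n, J (n + 1) → J n) (m : ℕ)
    (hAcover : ∀ n (x : X), ∃ j, x ∈ A n j)
    (hAclosed : ∀ n j, IsClosed (A n j)) (hAlf : ∀ n, LocallyFinite (A n))
    (hAB : ∀ n (a b : J n), (A n a ∩ A n b).Nonempty → (B n a ∩ B n b).Nonempty)
    (hBclosed : ∀ n j, IsClosed (B n j)) (hBlf : ∀ n, LocallyFinite (B n))
    (hchainA : ∀ n j, A (n + 1) j ⊆ A n (ψ n j))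
    (hchainB : ∀ n j, (starSet (B (n + 1)))^[m] (B (n + 1) j) ⊆ (starSet (B n))^[m] (B n (ψ n j)))
    (hmesh : ∀ ε : ℝ≥0∞, 0 < ε → ∃ N, ∀ n, N ≤ n → ∀ j, EMetric.diam (B n j) ≤ ε) :
    ∃ h : X → Y, Continuous h ∧
      ∀ (x : X) (n : ℕ), ∃ a, x ∈ A n a ∧ h x ∈ (starSet (B n))^[m] (B n a) := by
  have hdescA : ∀ (d n : ℕ) (j : J (n + d)) (x : X), x ∈ A (n + d) j → x ∈ A n (desc ψ d n j) := by
    intro d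
    induction d with
    | zero => intro n j x hx; exact hx
    | succ d ih => intro n j x hx; exact ih n (ψ (n + d) j) x (hchainA (n + d) j hx)
  have hdescB : ∀ (d n : ℕ) (j : J (n + d)),
      (starSet (B (n + d)))^[m] (B (n + d) j) ⊆ (starSet (B n))^[m] (B n (desc ψ d n j)) := by
    intro d
    induction d with
    | zero => intro n j; exact subset_rfl
    | succ d ih => intro n j; exact (hchainB (n + d) j).trans (ih n (ψ (n + d) j))
  have key : ∀ x : X, ∃ yy : Y, ∀ n : ℕ, ∃ a, x ∈ A n a ∧ yy ∈ (starSet (B n))^[m] (B n a) := by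
    intro x
    choose j hj using fun n => hAcover n x
    have hBne : ∀ n, (B n (j n)).Nonempty := fun n =>
      ((hAB n (j n) (j n)) ⟨x, hj n, hj n⟩).imp fun z hz => hz.1
    choose y hy using hBne
    have happ : ∀ (n d : ℕ), x ∈ A n (desc ψ d n (j (n + d))) ∧
        y (n + d) ∈ (starSet (B n))^[m] (B n (desc ψ d n (j (n + d)))) :=
      fun n d => ⟨hdescA d n (j (n + d)) x (hj (n + d)),
        hdescB d n (j (n + d)) (subset_iter _ _ m (hy (n + d)))⟩
    have hcauchy : CauchySeq y := by
      rw [EMetric.cauchySeq_iff]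
      intro ε hε
      obtain ⟨δ, hδ0, hδ⟩ := aux_delta (2 * (m + 1) + 1) hε
      obtain ⟨N, hN⟩ := hmesh δ hδ0
      refine ⟨N, fun p hp q hq => ?_⟩
      obtain ⟨d, rfl⟩ : ∃ d, p = N + d := ⟨p - N, by omega⟩
      obtain ⟨e, rfl⟩ : ∃ e, q = N + e := ⟨q - N, by omega⟩
      obtain ⟨ha1, ha2⟩ := happ N d
      obtain ⟨hb1, hb2⟩ := happ N e
      have hmeet := hAB N _ _ ⟨x, ha1, hb1⟩
      have hsub : (starSet (B N))^[m] (B N (desc ψ e N (j (N + e)))) ⊆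
          (starSet (B N))^[m + 1] (B N (desc ψ d N (j (N + d)))) :=
        iter_subset_iter_of_subset (B N)
          (master (B N) (B N) (r := 0) (r' := 0) hmeet (fun _ _ hh => hh)) (by omega)
      have e1 : y (N + d) ∈ (starSet (B N))^[m + 1] (B N (desc ψ d N (j (N + d)))) :=
        iter_le_iter (B N) _ (by omega) ha2
      have e2 : y (N + e) ∈ (starSet (B N))^[m + 1] (B N (desc ψ d N (j (N + d)))) := hsub hb2
      calc edist (y (N + d)) (y (N + e))
          ≤ EMetric.diam ((starSet (B N))^[m + 1] (B N (desc ψ d N (j (N + d))))) :=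
            EMetric.edist_le_diam_of_mem e1 e2
        _ ≤ ((2 * (m + 1) + 1 : ℕ) : ℝ≥0∞) * δ :=
            diam_iter_le (B N) (fun i => hN N le_rfl i) _ (m + 1)
        _ < ε := hδ
    obtain ⟨yy, hyy⟩ := cauchySeq_tendsto_of_complete hcauchy
    refine ⟨yy, fun n => ?_⟩
    have hsfin : {a : J n | x ∈ A n a}.Finite := (hAlf n).point_finite x
    haveI := hsfin.to_subtype
    set f : ℕ → {a : J n | x ∈ A n a} := fun d => ⟨desc ψ d n (j (n + d)), (happ n d).1⟩ with hf
    obtain ⟨a, hfib⟩ := Finite.exists_infinite_fiber f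
    have hinf : {d | f d = a}.Infinite := Set.infinite_coe_iff.mp hfib
    have hfreq : ∃ᶠ d in Filter.atTop, y (n + d) ∈ (starSet (B n))^[m] (B n a.val) := by
      apply (Nat.frequently_atTop_iff_infinite.mpr hinf).mono
      intro d hd
      have : desc ψ d n (j (n + d)) = a.val := congrArg Subtype.val hd
      have h2 := (happ n d).2
      rwa [this] at h2
    have htend : Filter.Tendsto (fun d => y (n + d)) Filter.atTop (nhds yy) := by
      have h1 : (fun d => y (n + d)) = (fun d => y (d + n)) := funext fun d => by rw [Nat.add_comm]
      rw [h1]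
      exact hyy.comp (Filter.tendsto_add_atTop_nat n)
    have hcl : IsClosed ((starSet (B n))^[m] (B n a.val)) :=
      isClosed_iter (B n) (hBclosed n) (hBlf n) (hBclosed n a.val) m
    exact ⟨a.val, a.2, hcl.mem_of_frequently_of_tendsto hfreq htend⟩
  choose h hQ using key
  refine ⟨h, ?_, hQ⟩
  rw [continuous_iff_continuousAt]
  intro x
  apply EMetric.tendsto_nhds.mpr
  intro ε hε
  obtain ⟨δ, hδ0, hδ⟩ := aux_delta (2 * (m + 1) + 1) hε
  obtain ⟨N, hN⟩ := hmesh δ hδ0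
  obtain ⟨a, ha, hha⟩ := hQ x N
  have hU : ∀ᶠ x' in nhds x, ∀ a' : J N, x' ∈ A N a' → x ∈ A N a' := by
    have hclosed : IsClosed (⋃ a' : {a' : J N // x ∉ A N a'}, A N (a' : J N)) :=
      ((hAlf N).comp_injective Subtype.coe_injective).isClosed_iUnion fun i => hAclosed N i
    have hx : x ∈ (⋃ a' : {a' : J N // x ∉ A N a'}, A N (a' : J N))ᶜ := by
      simp only [mem_compl_iff, mem_iUnion, not_exists]
      rintro ⟨a', ha'⟩
      exact ha'
    filter_upwards [hclosed.isOpen_compl.mem_nhds hx] with x' hx' a' hxa'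
    by_contra hxa
    exact hx' (mem_iUnion.mpr ⟨⟨a', hxa⟩, hxa'⟩)
  filter_upwards [hU] with x' hx'
  obtain ⟨a', ha', hha'⟩ := hQ x' N
  have hxa' : x ∈ A N a' := hx' a' ha'
  have hmeet := hAB N a a' ⟨x, ha, hxa'⟩
  have hsub : (starSet (B N))^[m] (B N a') ⊆ (starSet (B N))^[m + 1] (B N a) :=
    iter_subset_iter_of_subset (B N)
      (master (B N) (B N) (r := 0) (r' := 0) hmeet (fun _ _ hh => hh)) (by omega)
  have e1 : h x ∈ (starSet (B N))^[m + 1] (B N a) := iter_le_iter (B N) _ (by omega) hha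
  have e2 : h x' ∈ (starSet (B N))^[m + 1] (B N a) := hsub hha'
  calc edist (h x') (h x) ≤ EMetric.diam ((starSet (B N))^[m + 1] (B N a)) :=
        EMetric.edist_le_diam_of_mem e2 e1
    _ ≤ ((2 * (m + 1) + 1 : ℕ) : ℝ≥0∞) * δ := diam_iter_le (B N) (fun i => hN N le_rfl i) a (m + 1)
    _ < ε := hδ

lemma eq_of_forall_edist_le {Z : Type} [MetricSpace Z] {p q : Z}
    (h : ∀ ε : ℝ≥0∞, 0 < ε → edist p q ≤ ε) : p = q := by
  rw [← edist_le_zero]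
  exact le_of_forall_gt_imp_ge_of_dense fun c hc => h c hc

/-- **The homeomorphism extension theorem** (brick partitionings).  Here the paper's
covers `F_k, G_k` (`k ≥ 1`) are `F (k+1), G (k+1)` and the paper's index map
`f_k : I_k → I_(k-1)` is `φ (k-1)`; the hypotheses below are the paper's conditions
`F_(2k+1) ≺ st^m F_(2k) ≺ F_(2k-1)` and `st^m G_(2k+1) ≺ G_(2k) ≺ st^m G_(2k-1)`
for every `k ≥ 1`. -/
theorem homeomorphism_extension {X Y : Type} [MetricSpace X] [MetricSpace Y]
    [CompleteSpace X] [CompleteSpace Y]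
    (I : ℕ → Type) (F : ∀ k, I k → Set X) (G : ∀ k, I k → Set Y)
    (φ : ∀ k, I (k + 1) → I k) (m : ℕ)
    (hFcover : ∀ k, (⋃ i, F k i) = univ) (hGcover : ∀ k, (⋃ i, G k i) = univ)
    (hFclosed : ∀ k i, IsClosed (F k i)) (hGclosed : ∀ k i, IsClosed (G k i))
    (hFlf : ∀ k, LocallyFinite (F k)) (hGlf : ∀ k, LocallyFinite (G k))
    (hiso : ∀ k (J : Set (I k)), J.Nonempty →
      ((⋂ i ∈ J, F k i).Nonempty ↔ (⋂ i ∈ J, G k i).Nonempty))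
    (h₁ : ∀ k (i : I (2 * k + 3)),
      F (2 * k + 3) i ⊆ starPow (F (2 * k + 2)) m (φ (2 * k + 2) i))
    (h₂ : ∀ k (i : I (2 * k + 2)),
      starPow (F (2 * k + 2)) m i ⊆ F (2 * k + 1) (φ (2 * k + 1) i))
    (h₃ : ∀ k (i : I (2 * k + 3)),
      starPow (G (2 * k + 3)) m i ⊆ G (2 * k + 2) (φ (2 * k + 2) i))
    (h₄ : ∀ k (i : I (2 * k + 2)),
      G (2 * k + 2) i ⊆ starPow (G (2 * k + 1)) m (φ (2 * k + 1) i))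
    (hmesh : ∀ ε : ℝ≥0∞, 0 < ε → ∃ N, ∀ k, N ≤ k → ∀ i : I k,
      EMetric.diam (F k i) ≤ ε ∧ EMetric.diam (G k i) ≤ ε) :
    ∃! h : X ≃ₜ Y, ∀ (k : ℕ) (i : I (k + 1)) (x : X),
      x ∈ F (k + 1) i → h x ∈ starPow (G (k + 1)) (m + 1) i := by
  classical
  have hisoF : ∀ k (a b : I k), (F k a ∩ F k b).Nonempty → (G k a ∩ G k b).Nonempty := by
    intro k a b hab
    have h := (hiso k {a, b} ⟨a, by simp⟩).mp (by rwa [biInter_pair])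
    rwa [biInter_pair] at h
  have hisoG : ∀ k (a b : I k), (G k a ∩ G k b).Nonempty → (F k a ∩ F k b).Nonempty := by
    intro k a b hab
    have h := (hiso k {a, b} ⟨a, by simp⟩).mpr (by rwa [biInter_pair])
    rwa [biInter_pair] at h
  have hFco : ∀ k (x : X), ∃ i, x ∈ F k i := fun k x =>
    mem_iUnion.mp (by rw [hFcover k]; trivial)
  have hGco : ∀ k (y : Y), ∃ i, y ∈ G k i := fun k y =>
    mem_iUnion.mp (by rw [hGcover k]; trivial)
  -- forward map
  obtain ⟨hX, hXcont, QX⟩ :=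
    construct (fun n => I (2 * n + 3)) (fun n => F (2 * n + 3)) (fun n => G (2 * n + 3))
      (fun n j => φ (2 * n + 3) (φ (2 * n + 4) j)) m
      (fun n x => hFco (2 * n + 3) x)
      (fun n j => hFclosed _ j) (fun n => hFlf _)
      (fun n a b => hisoF (2 * n + 3) a b)
      (fun n j => hGclosed _ j) (fun n => hGlf _)
      (fun n j => (h₁ (n + 1) j).trans (h₂ (n + 1) (φ (2 * n + 4) j)))
      (fun n j => by
        rw [← starPow_eq, ← starPow_eq]
        exact (h₃ (n + 1) j).trans (h₄ (n + 1) (φ (2 * n + 4) j)))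
      (fun ε hε => by
        obtain ⟨N, hN⟩ := hmesh ε hε
        exact ⟨N, fun n hn j => (hN (2 * n + 3) (by omega) j).2⟩)
  -- backward map
  obtain ⟨hYf, hYcont, QY⟩ :=
    construct (fun n => I (2 * n + 2)) (fun n => G (2 * n + 2)) (fun n => F (2 * n + 2))
      (fun n j => φ (2 * n + 2) (φ (2 * n + 3) j)) m
      (fun n y => hGco (2 * n + 2) y)
      (fun n j => hGclosed _ j) (fun n => hGlf _)
      (fun n a b => hisoG (2 * n + 2) a b)
      (fun n j => hFclosed _ j) (fun n => hFlf _)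
      (fun n j => (h₄ (n + 1) j).trans (h₃ n (φ (2 * n + 3) j)))
      (fun n j => by
        rw [← starPow_eq, ← starPow_eq]
        exact (h₂ (n + 1) j).trans (h₁ n (φ (2 * n + 3) j)))
      (fun ε hε => by
        obtain ⟨N, hN⟩ := hmesh ε hε
        exact ⟨N, fun n hn j => (hN (2 * n + 2) (by omega) j).1⟩)
  -- left inverse
  have hleft : ∀ x, hYf (hX x) = x := by
    intro x
    apply eq_of_forall_edist_le
    intro ε hε
    obtain ⟨δ, hδ0, hδ⟩ := aux_delta (2 * (m + 1) + 1) hε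
    obtain ⟨N, hN⟩ := hmesh δ hδ0
    obtain ⟨a, hxa, hya⟩ := QX x N
    obtain ⟨c, hyc, hxc⟩ := QY (hX x) N
    have hya2 : hX x ∈ G (2 * N + 2) (φ (2 * N + 2) a) := by
      have h := h₃ N a; rw [starPow_eq] at h; exact h hya
    have hmeet : (F (2 * N + 2) (φ (2 * N + 2) a) ∩ F (2 * N + 2) c).Nonempty :=
      hisoG _ _ _ ⟨hX x, hya2, hyc⟩
    have hsub : (starSet (F (2 * N + 2)))^[m] (F (2 * N + 2) c) ⊆
        (starSet (F (2 * N + 2)))^[m + 1] (F (2 * N + 2) (φ (2 * N + 2) a)) :=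
      iter_subset_iter_of_subset _
        (master (F (2 * N + 2)) (F (2 * N + 2)) (r := 0) (r' := 0) hmeet (fun _ _ hh => hh))
        (by omega)
    have hx2 : x ∈ (starSet (F (2 * N + 2)))^[m + 1] (F (2 * N + 2) (φ (2 * N + 2) a)) := by
      have h := h₁ N a; rw [starPow_eq] at h
      exact iter_le_iter _ _ (by omega) (h hxa)
    calc edist (hYf (hX x)) x
        ≤ EMetric.diam ((starSet (F (2 * N + 2)))^[m + 1] (F (2 * N + 2) (φ (2 * N + 2) a))) :=
          EMetric.edist_le_diam_of_mem (hsub hxc) hx2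
      _ ≤ ((2 * (m + 1) + 1 : ℕ) : ℝ≥0∞) * δ :=
          diam_iter_le _ (fun i => (hN (2 * N + 2) (by omega) i).1) _ (m + 1)
      _ ≤ ε := hδ.le
  -- right inverse
  have hright : ∀ y, hX (hYf y) = y := by
    intro y
    apply eq_of_forall_edist_le
    intro ε hε
    obtain ⟨δ, hδ0, hδ⟩ := aux_delta (2 * (m + m + 1) + 1) hε
    obtain ⟨N, hN⟩ := hmesh δ hδ0
    obtain ⟨c, hyc, hxc⟩ := QY y N
    obtain ⟨a, hxa, hya⟩ := QX (hYf y) N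
    have hx2 : hYf y ∈ (starSet (F (2 * N + 2)))^[m] (F (2 * N + 2) (φ (2 * N + 2) a)) := by
      have h := h₁ N a; rw [starPow_eq] at h; exact h hxa
    have hya2 : hX (hYf y) ∈ G (2 * N + 2) (φ (2 * N + 2) a) := by
      have h := h₃ N a; rw [starPow_eq] at h; exact h hya
    have hne : ((starSet (F (2 * N + 2)))^[m] (F (2 * N + 2) c) ∩
        (starSet (F (2 * N + 2)))^[m] (F (2 * N + 2) (φ (2 * N + 2) a))).Nonempty :=
      ⟨hYf y, hxc, hx2⟩
    have hsub : G (2 * N + 2) (φ (2 * N + 2) a) ⊆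
        (starSet (G (2 * N + 2)))^[m + m + 1] (G (2 * N + 2) c) :=
      master (F (2 * N + 2)) (G (2 * N + 2)) (r := m) (r' := m) hne (hisoF (2 * N + 2))
    have e1 : y ∈ (starSet (G (2 * N + 2)))^[m + m + 1] (G (2 * N + 2) c) :=
      subset_iter _ _ _ hyc
    calc edist (hX (hYf y)) y
        ≤ EMetric.diam ((starSet (G (2 * N + 2)))^[m + m + 1] (G (2 * N + 2) c)) :=
          EMetric.edist_le_diam_of_mem (hsub hya2) e1
      _ ≤ ((2 * (m + m + 1) + 1 : ℕ) : ℝ≥0∞) * δ :=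
          diam_iter_le _ (fun i => (hN (2 * N + 2) (by omega) i).2) _ (m + m + 1)
      _ ≤ ε := hδ.le
  -- the property
  have hprop : ∀ (k : ℕ) (i : I (k + 1)) (x : X),
      x ∈ F (k + 1) i → hX x ∈ starPow (G (k + 1)) (m + 1) i := by
    intro k i x hx
    rw [starPow_eq]
    rcases Nat.even_or_odd k with he | ho
    · obtain ⟨t, ht⟩ := he
      have hk : k = 2 * t := by omega
      subst hk
      obtain ⟨a, hxa, hya⟩ := QX x t
      have hya2 : hX x ∈ G (2 * t + 2) (φ (2 * t + 2) a) := by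
        have h := h₃ t a; rw [starPow_eq] at h; exact h hya
      have hya3 : hX x ∈
          (starSet (G (2 * t + 1)))^[m] (G (2 * t + 1) (φ (2 * t + 1) (φ (2 * t + 2) a))) := by
        have h := h₄ t (φ (2 * t + 2) a); rw [starPow_eq] at h; exact h hya2
      have hxa2 : x ∈ F (2 * t + 1) (φ (2 * t + 1) (φ (2 * t + 2) a)) :=
        h₂ t (φ (2 * t + 2) a) (h₁ t a hxa)
      have hmeet : (G (2 * t + 1) i ∩ G (2 * t + 1) (φ (2 * t + 1) (φ (2 * t + 2) a))).Nonempty :=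
        hisoF _ _ _ ⟨x, hx, hxa2⟩
      have hsub : (starSet (G (2 * t + 1)))^[m]
            (G (2 * t + 1) (φ (2 * t + 1) (φ (2 * t + 2) a))) ⊆
          (starSet (G (2 * t + 1)))^[m + 1] (G (2 * t + 1) i) :=
        iter_subset_iter_of_subset _
          (master (G (2 * t + 1)) (G (2 * t + 1)) (r := 0) (r' := 0) hmeet (fun _ _ hh => hh))
          (by omega)
      exact hsub hya3
    · obtain ⟨t, ht⟩ := ho
      subst ht
      obtain ⟨a, hxa, hya⟩ := QX x t
      have hya2 : hX x ∈ G (2 * t + 2) (φ (2 * t + 2) a) := by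
        have h := h₃ t a; rw [starPow_eq] at h; exact h hya
      have hx2 : x ∈ (starSet (F (2 * t + 2)))^[m] (F (2 * t + 2) (φ (2 * t + 2) a)) := by
        have h := h₁ t a; rw [starPow_eq] at h; exact h hxa
      have hne : ((starSet (F (2 * t + 2)))^[0] (F (2 * t + 2) i) ∩
          (starSet (F (2 * t + 2)))^[m] (F (2 * t + 2) (φ (2 * t + 2) a))).Nonempty :=
        ⟨x, hx, hx2⟩
      have hsub : G (2 * t + 2) (φ (2 * t + 2) a) ⊆
          (starSet (G (2 * t + 2)))^[0 + m + 1] (G (2 * t + 2) i) :=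
        master (F (2 * t + 2)) (G (2 * t + 2)) (r := 0) (r' := m) hne (hisoF (2 * t + 2))
      exact iter_le_iter _ _ (by omega) (hsub hya2)
  refine ⟨⟨⟨hX, hYf, hleft, hright⟩, hXcont, hYcont⟩, hprop, ?_⟩
  intro h' hp'
  apply Homeomorph.ext
  intro x
  apply eq_of_forall_edist_le
  intro ε hε
  obtain ⟨δ, hδ0, hδ⟩ := aux_delta (2 * (m + 1) + 1) hε
  obtain ⟨N, hN⟩ := hmesh δ hδ0
  obtain ⟨i, hi⟩ := hFco (N + 1) x
  have e1 : h' x ∈ (starSet (G (N + 1)))^[m + 1] (G (N + 1) i) := by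
    rw [← starPow_eq]; exact hp' N i x hi
  have e2 : hX x ∈ (starSet (G (N + 1)))^[m + 1] (G (N + 1) i) := by
    have h := hprop N i x hi; rwa [starPow_eq] at h
  calc edist (h' x) (hX x)
      ≤ EMetric.diam ((starSet (G (N + 1)))^[m + 1] (G (N + 1) i)) :=
        EMetric.edist_le_diam_of_mem e1 e2
    _ ≤ ((2 * (m + 1) + 1 : ℕ) : ℝ≥0∞) * δ :=
        diam_iter_le _ (fun i => (hN (N + 1) (by omega) i).2) _ (m + 1)
    _ ≤ ε := hδ.le

end NobelingPaper
end

section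
/- For subcomplexes $L_1, \dots, L_k$ of a simplicial complex and any integer $m > 1$, $\mathrm{bst}^m L_1 \cap \cdots \cap \mathrm{bst}^m L_k = \mathrm{bst}^{m-1}(\mathrm{bst}\,L_1 \cap \cdots \cap \mathrm{bst}\,L_k)$. Key step: if $L$ and $M$ are subcomplexes with $L \cup M$ a full subcomplex, then $\mathrm{bst}\,L \cap \mathrm{bst}\,M = \mathrm{bst}(L\cap M)$. -/
open Set ContinuousMap
open scoped ENNReal

namespace NobelingPaper

/-- An abstract simplicial complex on a vertex type `V`: a collection of non-empty
finite sets of vertices, closed under passing to non-empty subsets. -/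
structure ASC (V : Type) where
  faces : Set (Finset V)
  nonempty_of_mem : ∀ s ∈ faces, s.Nonempty
  down_closed : ∀ s ∈ faces, ∀ t ⊆ s, t.Nonempty → t ∈ faces

/-- The set of vertices of a complex. -/
def ASC.vertices {V : Type} (K : ASC V) : Set V := {v | ({v} : Finset V) ∈ K.faces}

/-- The (first) barycentric subdivision, combinatorially: its vertices are the faces
of `K` (thought of as their barycenters) and its faces are the non-empty chains of
faces of `K`. -/
def sd {V : Type} (K : ASC V) : ASC (Finset V) where
  faces := {c | (∀ s ∈ c, s ∈ K.faces) ∧ IsChain (· ⊆ ·) (↑c : Set (Finset V)) ∧ c.Nonempty}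
  nonempty_of_mem := fun _ hc => hc.2.2
  down_closed := fun _ hc _ ht htne =>
    ⟨fun s hs => hc.1 s (ht hs), by exact hc.2.1.mono (Finset.coe_subset.mpr ht), htne⟩

/-- The barycentric star `bst L` of a subcomplex `L` of `K`: the subcomplex of the
barycentric subdivision of `K` consisting of the simplices contained in the
barycentric star of some vertex of `L`. -/
def bstC {V : Type} (K L : ASC V) : ASC (Finset V) where
  faces := {c | c ∈ (sd K).faces ∧ ∃ v, ({v} : Finset V) ∈ L.faces ∧ ∀ s ∈ c, v ∈ s}
  nonempty_of_mem := fun _ hc => hc.1.2.2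
  down_closed := fun c hc t ht htne =>
    ⟨(sd K).down_closed c hc.1 t ht htne,
      hc.2.elim fun v hv => ⟨v, hv.1, fun s hs => hv.2 s (ht hs)⟩⟩

/-- Iterated `Finset`: the vertex type of the `m`-th barycentric subdivision. -/
def SdIter : ℕ → Type → Type
  | 0, V => V
  | m + 1, V => SdIter m (Finset V)

/-- The `m`-th barycentric subdivision. -/
def sdPow : ∀ (m : ℕ) {V : Type}, ASC V → ASC (SdIter m V)
  | 0, _, K => K
  | m + 1, _, K => sdPow m (sd K)

/-- The `m`-th barycentric star `bst^m L` of a subcomplex `L` of `K`, defined by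
`bst^m L = bst (bst^(m-1) L)`; it is a subcomplex of the `m`-th barycentric
subdivision of `K`. -/
def bstPow : ∀ (m : ℕ) {V : Type}, ASC V → ASC V → ASC (SdIter m V)
  | 0, _, _, L => L
  | m + 1, _, K, L => bstPow m (sd K) (bstC K L)

/-- Intersection of a family of subcomplexes (pointed at `i₀` to witness
non-emptiness of faces). -/
def interASC {V ι : Type} (i₀ : ι) (L : ι → ASC V) : ASC V where
  faces := ⋂ i, (L i).faces
  nonempty_of_mem := fun s hs => (L i₀).nonempty_of_mem s (Set.mem_iInter.mp hs i₀)
  down_closed := fun s hs t ht htne => Set.mem_iInter.mpr fun i =>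
    (L i).down_closed s (Set.mem_iInter.mp hs i) t ht htne

/-- Binary intersection of subcomplexes. -/
def interASC2 {V : Type} (L M : ASC V) : ASC V where
  faces := L.faces ∩ M.faces
  nonempty_of_mem := fun s hs => L.nonempty_of_mem s hs.1
  down_closed := fun s hs t ht htne =>
    ⟨L.down_closed s hs.1 t ht htne, M.down_closed s hs.2 t ht htne⟩

/-- Binary union of subcomplexes. -/
def unionASC {V : Type} (L M : ASC V) : ASC V where
  faces := L.faces ∪ M.faces
  nonempty_of_mem := fun s hs => hs.elim (L.nonempty_of_mem s) (M.nonempty_of_mem s)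
  down_closed := fun s hs t ht htne => hs.elim
    (fun h => Or.inl (L.down_closed s h t ht htne))
    (fun h => Or.inr (M.down_closed s h t ht htne))

/-- `L` is a full subcomplex of `K`. -/
def IsFullSub {V : Type} (K L : ASC V) : Prop :=
  L.faces ⊆ K.faces ∧
    ∀ s ∈ K.faces, (∀ v ∈ s, ({v} : Finset V) ∈ L.faces) → s ∈ L.faces

theorem ASC.ext' {V : Type} {K K' : ASC V} (h : K.faces = K'.faces) : K = K' := by
  cases K; cases K'; simp_all

/-- The vertex set of `N` is upward closed among faces of `K` (as barycentric stars'
vertex sets are). -/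
def UpClosed {V : Type} (K : ASC V) (N : ASC (Finset V)) : Prop :=
  ∀ v v' : Finset V, ({v} : Finset (Finset V)) ∈ N.faces → v ⊆ v' → v' ∈ K.faces →
    ({v'} : Finset (Finset V)) ∈ N.faces

theorem upClosed_bstC {V : Type} (K : ASC V) (L : ASC V) : UpClosed K (bstC K L) := by
  rintro v v' ⟨hsd, w, hwL, hw⟩ hvv' hv'K
  refine ⟨⟨fun s hs => ?_, ?_, ⟨v', Finset.mem_singleton_self v'⟩⟩, w, hwL, fun s hs => ?_⟩
  · rw [Finset.mem_singleton] at hs; exact hs ▸ hv'K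
  · simp [Set.Subsingleton.isChain, Set.subsingleton_singleton]
  · rw [Finset.mem_singleton] at hs
    exact hs ▸ hvv' (hw v (Finset.mem_singleton_self v))

theorem claimA {k : ℕ} {V : Type} (K : ASC V) (N : Fin (k + 1) → ASC (Finset V))
    (h : ∀ i, UpClosed K (N i)) :
    (⋂ i, (bstC (sd K) (N i)).faces) = (bstC (sd K) (interASC 0 N)).faces := by
  classical
  ext c
  constructor
  · intro hc
    rw [Set.mem_iInter] at hc
    choose hsd v hv hvmem using hc
    obtain ⟨s₀, hs₀⟩ := (hsd 0).2.2
    have hs₀sd : s₀ ∈ (sd K).faces := (hsd 0).1 s₀ hs₀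
    have hvs₀ : ∀ i, v i ∈ s₀ := fun i => hvmem i s₀ hs₀
    set T : Finset (Finset V) := Finset.image v Finset.univ with hT
    have hTne : T.Nonempty := ⟨v 0, Finset.mem_image_of_mem v (Finset.mem_univ 0)⟩
    obtain ⟨m, hmT, hmax⟩ := T.exists_maximal hTne
    obtain ⟨i₀, -, hi₀⟩ := Finset.mem_image.mp hmT
    have hms₀ : m ∈ s₀ := hi₀ ▸ hvs₀ i₀
    have hle : ∀ i, v i ⊆ m := by
      intro i
      have hvT : v i ∈ T := Finset.mem_image_of_mem v (Finset.mem_univ i)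
      rcases eq_or_ne (v i) m with he | hne
      · exact he ▸ subset_rfl
      · rcases hs₀sd.2.1 (Finset.mem_coe.mpr hms₀) (Finset.mem_coe.mpr (hvs₀ i))
          (Ne.symm hne) with hsub | hsub
        · exact hmax hvT hsub
        · exact hsub
    refine ⟨hsd 0, m, Set.mem_iInter.mpr fun i =>
      h i (v i) m (hv i) (hle i) (hs₀sd.1 m hms₀), fun s hs => ?_⟩
    exact hi₀ ▸ hvmem i₀ s hs
  · rintro ⟨hsd, v, hv, hvmem⟩
    exact Set.mem_iInter.mpr fun i => ⟨hsd, v, Set.mem_iInter.mp hv i, hvmem⟩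

theorem lemG : ∀ (j k : ℕ) {V : Type} (K : ASC V) (N : Fin (k + 1) → ASC (Finset V)),
    (∀ i, UpClosed K (N i)) →
    (⋂ i, (bstPow (j + 1) (sd K) (N i)).faces) =
      (bstPow (j + 1) (sd K) (interASC 0 N)).faces
  | 0, k, V, K, N, h => claimA K N h
  | j + 1, k, V, K, N, h => by
    have step := lemG j k (sd K) (fun i => bstC (sd K) (N i))
      (fun i => upClosed_bstC (sd K) (N i))
    have heq : interASC 0 (fun i => bstC (sd K) (N i)) = bstC (sd K) (interASC 0 N) :=
      ASC.ext' (claimA K N h)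
    show (⋂ i, (bstPow (j + 1) (sd (sd K)) (bstC (sd K) (N i))).faces) =
      (bstPow (j + 1) (sd (sd K)) (bstC (sd K) (interASC 0 N))).faces
    rw [step, heq]

/-- For subcomplexes `L₁, …, L_k` of a complex `K` and `m > 1` (written `m = j + 2`),
`bst^m L₁ ∩ ⋯ ∩ bst^m L_k = bst^(m-1) (bst L₁ ∩ ⋯ ∩ bst L_k)`.  Key step: if
`L ∪ M` is full, then `bst L ∩ bst M = bst (L ∩ M)`. -/
theorem bstPow_iInter {V : Type} (K : ASC V) :
    (∀ (k : ℕ) (L : Fin (k + 1) → ASC V), (∀ i, (L i).faces ⊆ K.faces) →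
      ∀ j : ℕ, (⋂ i, (bstPow (j + 2) K (L i)).faces) =
        (bstPow (j + 1) (sd K) (interASC 0 fun i => bstC K (L i))).faces) ∧
      ∀ L M : ASC V, L.faces ⊆ K.faces → M.faces ⊆ K.faces →
        IsFullSub K (unionASC L M) →
        (bstC K L).faces ∩ (bstC K M).faces = (bstC K (interASC2 L M)).faces := by
  constructor
  · intro k L hL j
    exact lemG j k K (fun i => bstC K (L i)) (fun i => upClosed_bstC K (L i))
  · intro L M hL hM hfull
    classical
    ext c
    constructor
    · rintro ⟨⟨hsd, v, hvL, hvc⟩, -, w, hwM, hwc⟩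
      obtain ⟨s₀, hs₀⟩ := hsd.2.2
      have hs₀K : s₀ ∈ K.faces := hsd.1 s₀ hs₀
      have hvw : ({v, w} : Finset V) ∈ K.faces := by
        refine K.down_closed s₀ hs₀K _ ?_ ⟨v, Finset.mem_insert_self v {w}⟩
        intro u hu
        rcases Finset.mem_insert.mp hu with h | h
        · exact h ▸ hvc s₀ hs₀
        · exact (Finset.mem_singleton.mp h) ▸ hwc s₀ hs₀
      have hfullvw : ({v, w} : Finset V) ∈ (unionASC L M).faces := by
        refine hfull.2 _ hvw fun u hu => ?_
        rcases Finset.mem_insert.mp hu with h | h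
        · exact Or.inl (h ▸ hvL)
        · exact Or.inr ((Finset.mem_singleton.mp h) ▸ hwM)
      rcases hfullvw with h | h
      · have hwL : ({w} : Finset V) ∈ L.faces :=
          L.down_closed _ h {w} (by simp) ⟨w, Finset.mem_singleton_self w⟩
        exact ⟨hsd, w, ⟨hwL, hwM⟩, hwc⟩
      · have hvM : ({v} : Finset V) ∈ M.faces :=
          M.down_closed _ h {v} (by simp) ⟨v, Finset.mem_singleton_self v⟩
        exact ⟨hsd, v, ⟨hvL, hvM⟩, hvc⟩
    · rintro ⟨hsd, v, ⟨hvL, hvM⟩, hvc⟩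
      exact ⟨⟨hsd, v, hvL, hvc⟩, hsd, v, hvM, hvc⟩

end NobelingPaper
end

section
/- If $L$ is a full subcomplex of a locally finite-dimensional simplicial complex $K$, then $\mathrm{bst}\,L$ (the union of barycentric stars of the vertices of $L$) is homotopy equivalent to $L$. -/
open Set ContinuousMap
open scoped ENNReal

namespace NobelingPaper

/-- The geometric realization of an abstract simplicial complex, as a subset of
`ℓ∞(V)`; its subspace topology is the metric topology of the complex.  A point is a
convex combination of the vertices of some face. -/
def realization {V : Type} (K : ASC V) : Set (lp (fun _ : V => ℝ) ∞) :=
  {x | ∃ s ∈ K.faces, (∀ v, 0 ≤ x v) ∧ (∀ v, v ∉ s → x v = 0) ∧ ∑ v ∈ s, x v = 1}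

/-- `K` is locally finite dimensional. -/
def LocFinDim {V : Type} (K : ASC V) : Prop :=
  ∀ v ∈ K.vertices, ∃ n : ℕ, ∀ s ∈ K.faces, v ∈ s → s.card ≤ n

/-! ### Auxiliary development -/

set_option maxHeartbeats 1000000
set_option synthInstance.maxHeartbeats 1000000

noncomputable section Aux

open scoped Classical

variable {V : Type}

/-- The "barycentric coordinates" map: from a point of the subdivision (a weight
function on faces) produce a point of `|K|`. -/
def Bf (x : Finset V → ℝ) (v : V) : ℝ :=
  ∑ᶠ s : Finset V, if v ∈ s then x s / s.card else 0

/-- Total mass carried by the vertices of `L`. -/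
def Sf (L : ASC V) (y : V → ℝ) : ℝ :=
  ∑ᶠ v : V, if ({v} : Finset V) ∈ L.faces then y v else 0

/-- Normalized projection onto the vertices of `L`. -/
def Qf (L : ASC V) (y : V → ℝ) (v : V) : ℝ :=
  if ({v} : Finset V) ∈ L.faces then y v / Sf L y else 0

/-- Straight-line path from `y` to its normalized projection. -/
def Pf (L : ASC V) (t : ℝ) (y : V → ℝ) (v : V) : ℝ :=
  (1 - t) * y v + t * Qf L y v

/-- Minimum of `y` over a finset. -/
def mf (y : V → ℝ) (s : Finset V) : ℝ := ⨅ v : {u // u ∈ s}, y v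

/-- Supremum of `y` over the complement of a finset. -/
def Nf (y : V → ℝ) (s : Finset V) : ℝ := ⨆ w : {u // u ∉ s}, y w

/-- The inverse "subdivision coordinates" map. -/
def Gf (y : V → ℝ) (s : Finset V) : ℝ := s.card * max (mf y s - Nf y s) 0

/-- A point of a realization, with its supporting face made explicit. -/
structure KPt (A : ASC V) (t : Finset V) (y : V → ℝ) : Prop where
  face : t ∈ A.faces
  nonneg : ∀ v, 0 ≤ y v
  zero : ∀ v ∉ t, y v = 0
  sum : ∑ v ∈ t, y v = 1

/-- A point of `|K|` whose maximal coordinate is attained at a vertex of `L`. -/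
structure DPt (K L : ASC V) (t : Finset V) (y : V → ℝ) : Prop where
  kp : KPt K t y
  vstar : ∃ v, ({v} : Finset V) ∈ L.faces ∧ ∀ w, y w ≤ y v

/-- A point of `|bst L|` with explicit supporting chain. -/
structure CPt (K L : ASC V) (c : Finset (Finset V)) (x : Finset V → ℝ) : Prop where
  facebst : c ∈ (bstC K L).faces
  nonneg : ∀ s, 0 ≤ x s
  zero : ∀ s ∉ c, x s = 0
  sum : ∑ s ∈ c, x s = 1

section Basics

variable {A : ASC V} {t : Finset V} {y : V → ℝ}

theorem KPt.le_one (h : KPt A t y) (v : V) : y v ≤ 1 := by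
  by_cases hv : v ∈ t
  · calc y v ≤ ∑ u ∈ t, y u := Finset.single_le_sum (fun u _ => h.nonneg u) hv
    _ = 1 := h.sum
  · rw [h.zero v hv]; norm_num

theorem KPt.exists_pos (h : KPt A t y) : ∃ v ∈ t, 0 < y v := by
  by_contra hcon
  push_neg at hcon
  have : ∑ v ∈ t, y v = 0 :=
    Finset.sum_eq_zero fun v hv => le_antisymm (hcon v hv) (h.nonneg v)
  rw [h.sum] at this; norm_num at this

theorem KPt.card_pos (h : KPt A t y) : 0 < t.card :=
  Finset.card_pos.2 (A.nonempty_of_mem t h.face)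

theorem KPt.max_ge_inv_card (h : KPt A t y) {v : V} (hv : ∀ w, y w ≤ y v) :
    1 / (t.card : ℝ) ≤ y v := by
  have hc : (0:ℝ) < t.card := by exact_mod_cast h.card_pos
  rw [div_le_iff₀ hc] at *
  calc (1:ℝ) = ∑ w ∈ t, y w := h.sum.symm
  _ ≤ ∑ _w ∈ t, y v := Finset.sum_le_sum (fun w _ => hv w)
  _ = y v * t.card := by rw [Finset.sum_const, nsmul_eq_mul]; ring

end Basics

section Chains

theorem chain_greatest {c : Finset (Finset V)} (hch : IsChain (· ⊆ ·) (↑c : Set (Finset V)))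
    (hne : c.Nonempty) : ∃ T ∈ c, ∀ i ∈ c, i ⊆ T := by
  obtain ⟨T, hT, hmax⟩ := Finset.exists_max_image c Finset.card hne
  refine ⟨T, hT, fun i hi => ?_⟩
  rcases eq_or_ne i T with rfl | hne'
  · exact Finset.Subset.refl _
  · rcases hch (Finset.mem_coe.2 hi) (Finset.mem_coe.2 hT) hne' with h | h
    · exact h
    · rw [Finset.eq_of_subset_of_card_le h (hmax i hi)]

theorem chain_least {c : Finset (Finset V)} (hch : IsChain (· ⊆ ·) (↑c : Set (Finset V)))
    (hne : c.Nonempty) : ∃ T ∈ c, ∀ i ∈ c, T ⊆ i := by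
  obtain ⟨T, hT, hmin⟩ := Finset.exists_min_image c Finset.card hne
  refine ⟨T, hT, fun i hi => ?_⟩
  rcases eq_or_ne i T with rfl | hne'
  · exact Finset.Subset.refl _
  · rcases hch (Finset.mem_coe.2 hi) (Finset.mem_coe.2 hT) hne' with h | h
    · rw [← Finset.eq_of_subset_of_card_le h (hmin i hi)]
    · exact h

theorem chain_card_le {c : Finset (Finset V)} {n : ℕ}
    (hch : IsChain (· ⊆ ·) (↑c : Set (Finset V)))
    (hne : ∀ i ∈ c, i.Nonempty) (hcard : ∀ i ∈ c, i.card ≤ n) : c.card ≤ n := by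
  have hinj : Set.InjOn Finset.card (↑c : Set (Finset V)) := by
    intro i hi j hj hij
    rcases eq_or_ne i j with rfl | hne'
    · rfl
    · rcases hch hi hj hne' with h | h
      · exact Finset.eq_of_subset_of_card_le h hij.ge
      · exact (Finset.eq_of_subset_of_card_le h hij.le).symm
  have : c.card = (c.image Finset.card).card := (Finset.card_image_of_injOn hinj).symm
  rw [this]
  have hsub : c.image Finset.card ⊆ Finset.Icc 1 n := by
    intro m hm
    obtain ⟨i, hi, rfl⟩ := Finset.mem_image.1 hm
    exact Finset.mem_Icc.2 ⟨Finset.card_pos.2 (hne i hi), hcard i hi⟩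
  calc (c.image Finset.card).card ≤ (Finset.Icc 1 n).card := Finset.card_le_card hsub
  _ = n := by rw [Nat.card_Icc]; omega

end Chains

section InfSup

variable {y y' : V → ℝ} {s : Finset V}

theorem mf_le {v : V} (hv : v ∈ s) : mf y s ≤ y v :=
  ciInf_le (Set.Finite.bddBelow (Set.finite_range _)) (⟨v, hv⟩ : {u // u ∈ s})

theorem le_mf (hs : s.Nonempty) {a : ℝ} (h : ∀ v ∈ s, a ≤ y v) : a ≤ mf y s := by
  have : Nonempty {u // u ∈ s} := ⟨⟨hs.choose, hs.choose_spec⟩⟩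
  exact le_ciInf fun v => h v v.2

theorem mf_attained (hs : s.Nonempty) : ∃ v ∈ s, mf y s = y v := by
  obtain ⟨v, hv, hmin⟩ := Finset.exists_min_image s y hs
  exact ⟨v, hv, le_antisymm (mf_le hv) (le_mf hs hmin)⟩

theorem Nf_le {M : ℝ} (hM : 0 ≤ M) (h : ∀ w ∉ s, y w ≤ M) : Nf y s ≤ M :=
  Real.iSup_le (fun w => h w w.2) hM

theorem le_Nf {M : ℝ} (hub : ∀ u, y u ≤ M) {w : V} (hw : w ∉ s) : y w ≤ Nf y s :=
  le_ciSup ⟨M, by rintro r ⟨u, rfl⟩; exact hub u⟩ (⟨w, hw⟩ : {u // u ∉ s})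

theorem Nf_nonneg (h0 : ∀ w, 0 ≤ y w) {M : ℝ} (hub : ∀ u, y u ≤ M) : 0 ≤ Nf y s := by
  rcases isEmpty_or_nonempty {u // u ∉ s} with he | ⟨⟨w, hw⟩⟩
  · simp [Nf, Real.iSup_of_isEmpty]
  · exact le_trans (h0 w) (le_Nf hub hw)

theorem abs_mf_sub_mf_le (hs : s.Nonempty) {d : ℝ} (hd : 0 ≤ d)
    (h : ∀ v, |y v - y' v| ≤ d) : |mf y s - mf y' s| ≤ d := by
  obtain ⟨v, hv, hev⟩ := mf_attained (y := y) hs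
  obtain ⟨w, hw, hew⟩ := mf_attained (y := y') hs
  have h1 : mf y s ≤ y w := mf_le hw
  have h2 : mf y' s ≤ y' v := mf_le hv
  have h3 := abs_le.1 (h v)
  have h4 := abs_le.1 (h w)
  rw [abs_le]
  constructor
  · rw [hev]; linarith
  · rw [hew]; linarith

theorem abs_Nf_sub_Nf_le {M : ℝ} {d : ℝ} (hd : 0 ≤ d)
    (h0 : ∀ w, 0 ≤ y w) (h0' : ∀ w, 0 ≤ y' w)
    (hub : ∀ u, y u ≤ M) (hub' : ∀ u, y' u ≤ M)
    (h : ∀ v, |y v - y' v| ≤ d) : |Nf y s - Nf y' s| ≤ d := by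
  have key : ∀ (z z' : V → ℝ), (∀ w, 0 ≤ z' w) → (∀ u, z' u ≤ M) →
      (∀ v, z v - z' v ≤ d) → Nf z s ≤ Nf z' s + d := by
    intro z z' h0z hubz hdz
    refine Real.iSup_le (fun w => ?_) ?_
    · calc z w ≤ z' w + d := by linarith [hdz w]
      _ ≤ Nf z' s + d := by linarith [le_Nf hubz w.2]
    · have := Nf_nonneg (s := s) h0z hubz
      linarith
  have h1 := key y y' h0' hub' (fun v => (abs_le.1 (h v)).2)
  have h2 := key y' y h0 hub (fun v => by
    have := (abs_le.1 (h v)).1; linarith)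
  rw [abs_le]; constructor <;> linarith

end InfSup

section Telescope

/-- The predecessor of `θ` in a finite set of reals (or `0`). -/
def predW (W : Finset ℝ) (θ : ℝ) : ℝ :=
  (insert (0:ℝ) (W.filter (· < θ))).max' (Finset.insert_nonempty _ _)

theorem predW_nonneg (W : Finset ℝ) (θ : ℝ) : 0 ≤ predW W θ :=
  Finset.le_max' _ _ (Finset.mem_insert_self _ _)

theorem predW_lt {W : Finset ℝ} {θ : ℝ} (hθ : 0 < θ) : predW W θ < θ := by
  rw [predW, Finset.max'_lt_iff]
  intro x hx
  rcases Finset.mem_insert.1 hx with rfl | hx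
  · exact hθ
  · exact (Finset.mem_filter.1 hx).2

theorem predW_mem (W : Finset ℝ) (θ : ℝ) :
    predW W θ = 0 ∨ (predW W θ ∈ W ∧ predW W θ < θ) := by
  have := Finset.max'_mem _ (Finset.insert_nonempty (0:ℝ) (W.filter (· < θ)))
  rcases Finset.mem_insert.1 this with h | h
  · exact Or.inl h
  · exact Or.inr ⟨(Finset.mem_filter.1 h).1, (Finset.mem_filter.1 h).2⟩

theorem le_predW {W : Finset ℝ} {x θ : ℝ} (hx : x ∈ W) (hlt : x < θ) : x ≤ predW W θ := by
  refine Finset.le_max' _ _ ?_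
  exact Finset.mem_insert_of_mem (Finset.mem_filter.2 ⟨hx, hlt⟩)

theorem telescope_sum (W : Finset ℝ) (hpos : ∀ θ ∈ W, 0 < θ) :
    ∀ r ∈ W, ∑ θ ∈ W.filter (· ≤ r), (θ - predW W θ) = r := by
  suffices key : ∀ n : ℕ, ∀ r ∈ W, (W.filter (· ≤ r)).card ≤ n →
      ∑ θ ∈ W.filter (· ≤ r), (θ - predW W θ) = r from
    fun r hr => key _ r hr le_rfl
  intro n
  induction n with
  | zero =>
    intro r hr hcard
    exfalso
    have : 0 < (W.filter (· ≤ r)).card :=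
      Finset.card_pos.2 ⟨r, Finset.mem_filter.2 ⟨hr, le_rfl⟩⟩
    omega
  | succ n ih =>
    intro r hr hcard
    have hpr : predW W r < r := predW_lt (hpos r hr)
    have hsplit : W.filter (· ≤ r) = insert r (W.filter (· ≤ predW W r)) := by
      ext θ
      simp only [Finset.mem_filter, Finset.mem_insert]
      constructor
      · rintro ⟨hθW, hθr⟩
        rcases eq_or_lt_of_le hθr with rfl | hlt
        · exact Or.inl rfl
        · exact Or.inr ⟨hθW, le_predW hθW hlt⟩
      · rintro (rfl | ⟨hθW, hθp⟩)
        · exact ⟨hr, le_rfl⟩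
        · exact ⟨hθW, hθp.trans hpr.le⟩
    have hrnot : r ∉ W.filter (· ≤ predW W r) := by
      simp only [Finset.mem_filter, not_and]
      intro _
      exact not_le.2 hpr
    rw [hsplit, Finset.sum_insert hrnot]
    rcases predW_mem W r with h0 | ⟨hpW, _⟩
    · have hemp : W.filter (· ≤ predW W r) = ∅ := by
        rw [Finset.filter_eq_empty_iff]
        intro θ hθ
        rw [h0]
        exact not_le.2 (hpos θ hθ)
      rw [hemp, Finset.sum_empty, h0]
      ring
    · have hcard' : (W.filter (· ≤ predW W r)).card ≤ n := by
        have hins := Finset.card_insert_of_notMem hrnot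
        rw [← hsplit] at hins
        omega
      rw [ih (predW W r) hpW hcard']
      ring

end Telescope

/-! ### Superlevel set machinery: from a point of `|K|` to a point of the subdivision -/

section Superlevel

variable (t : Finset V) (y : V → ℝ)

/-- The positive support. -/
def posSupp : Finset V := t.filter (fun v => 0 < y v)

/-- The superlevel set at level `θ`. -/
def slev (θ : ℝ) : Finset V := (posSupp t y).filter (fun v => θ ≤ y v)

/-- The set of positive values. -/
def vals : Finset ℝ := (posSupp t y).image y

/-- The chain of superlevel sets. -/
def chainOf : Finset (Finset V) := (vals t y).image (slev t y)

variable {t y}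
variable {A : ASC V}

theorem zero_of_not_posSupp (h : KPt A t y) {v : V} (hv : v ∉ posSupp t y) : y v = 0 := by
  by_cases hvt : v ∈ t
  · rcases lt_or_eq_of_le (h.nonneg v) with hpos | hz
    · exact absurd (Finset.mem_filter.2 ⟨hvt, hpos⟩) hv
    · exact hz.symm
  · exact h.zero v hvt

theorem sum_posSupp (h : KPt A t y) : ∑ v ∈ posSupp t y, y v = 1 := by
  rw [← h.sum]
  exact Finset.sum_filter_of_ne (fun v _ hv => lt_of_le_of_ne (h.nonneg v) (Ne.symm hv))

theorem vals_pos {θ : ℝ} (hθ : θ ∈ vals t y) : 0 < θ := by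
  obtain ⟨v, hv, rfl⟩ := Finset.mem_image.1 hθ
  exact (Finset.mem_filter.1 hv).2

theorem mem_slev {θ : ℝ} {v : V} : v ∈ slev t y θ ↔ v ∈ posSupp t y ∧ θ ≤ y v :=
  Finset.mem_filter

theorem slev_nonempty {θ : ℝ} (hθ : θ ∈ vals t y) : (slev t y θ).Nonempty := by
  obtain ⟨v, hv, rfl⟩ := Finset.mem_image.1 hθ
  exact ⟨v, mem_slev.2 ⟨hv, le_refl _⟩⟩

theorem mf_slev (h : KPt A t y) {θ : ℝ} (hθ : θ ∈ vals t y) : mf y (slev t y θ) = θ := by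
  obtain ⟨v, hv, rfl⟩ := Finset.mem_image.1 hθ
  refine le_antisymm (mf_le (mem_slev.2 ⟨hv, le_refl _⟩)) ?_
  exact le_mf (slev_nonempty hθ) (fun u hu => (mem_slev.1 hu).2)

theorem Nf_slev (h : KPt A t y) {θ : ℝ} (hθ : θ ∈ vals t y) :
    Nf y (slev t y θ) = predW (vals t y) θ := by
  refine le_antisymm (Nf_le (predW_nonneg _ _) (fun w hw => ?_)) ?_
  · by_cases hwp : w ∈ posSupp t y
    · refine le_predW (Finset.mem_image_of_mem y hwp) ?_
      by_contra hcon
      push_neg at hcon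
      exact hw (mem_slev.2 ⟨hwp, hcon⟩)
    · rw [zero_of_not_posSupp h hwp]; exact predW_nonneg _ _
  · rcases predW_mem (vals t y) θ with h0 | ⟨hmem, hlt⟩
    · rw [h0]; exact Nf_nonneg h.nonneg h.le_one
    · obtain ⟨w, hw, hwe⟩ := Finset.mem_image.1 hmem
      have hwns : w ∉ slev t y θ := by
        intro hcon
        have := (mem_slev.1 hcon).2
        rw [hwe] at this
        exact absurd this (not_le.2 hlt)
      calc predW (vals t y) θ = y w := hwe.symm
      _ ≤ Nf y (slev t y θ) := le_Nf h.le_one hwns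

theorem Gf_slev (h : KPt A t y) {θ : ℝ} (hθ : θ ∈ vals t y) :
    Gf y (slev t y θ) = (slev t y θ).card * (θ - predW (vals t y) θ) := by
  rw [Gf, mf_slev h hθ, Nf_slev h hθ, max_eq_left]
  linarith [predW_lt (W := vals t y) (vals_pos hθ)]

theorem slev_injOn (h : KPt A t y) :
    Set.InjOn (slev t y) (↑(vals t y) : Set ℝ) := by
  intro a ha b hb hab
  have := mf_slev h (Finset.mem_coe.1 ha)
  rw [hab, mf_slev h (Finset.mem_coe.1 hb)] at this
  exact this.symm

theorem Gf_pos_struct (h : KPt A t y) {s : Finset V} (hs : Gf y s ≠ 0) :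
    s.Nonempty ∧ Nf y s < mf y s := by
  rcases mul_ne_zero_iff.1 hs with ⟨hcard, hmax⟩
  refine ⟨Finset.card_pos.1 (Nat.pos_of_ne_zero (by exact_mod_cast hcard)), ?_⟩
  by_contra hcon
  push_neg at hcon
  exact hmax (max_eq_right (sub_nonpos.2 hcon))

theorem slev_mf_eq (h : KPt A t y) {s : Finset V} (hsne : s.Nonempty)
    (hlt : Nf y s < mf y s) : s = slev t y (mf y s) ∧ mf y s ∈ vals t y := by
  have hN0 : 0 ≤ Nf y s := Nf_nonneg h.nonneg h.le_one
  have hθpos : 0 < mf y s := lt_of_le_of_lt hN0 hlt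
  have hsub : ∀ v ∈ s, v ∈ posSupp t y := by
    intro v hv
    have hyv : 0 < y v := lt_of_lt_of_le hθpos (mf_le hv)
    refine Finset.mem_filter.2 ⟨?_, hyv⟩
    by_contra hvt
    rw [h.zero v hvt] at hyv
    norm_num at hyv
  have hseq : s = slev t y (mf y s) := by
    apply Finset.Subset.antisymm
    · intro v hv
      exact mem_slev.2 ⟨hsub v hv, mf_le hv⟩
    · intro w hw
      by_contra hws
      have h1 : y w ≤ Nf y s := le_Nf h.le_one hws
      have h2 : mf y s ≤ y w := (mem_slev.1 hw).2
      linarith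
  obtain ⟨v, hv, hev⟩ := mf_attained hsne
  exact ⟨hseq, Finset.mem_image.2 ⟨v, hsub v hv, hev.symm⟩⟩

theorem Gf_support (h : KPt A t y) {s : Finset V} (hs : Gf y s ≠ 0) :
    s ∈ chainOf t y := by
  obtain ⟨hsne, hlt⟩ := Gf_pos_struct h hs
  obtain ⟨hseq, hmem⟩ := slev_mf_eq h hsne hlt
  exact Finset.mem_image.2 ⟨mf y s, hmem, hseq.symm⟩

theorem slev_card_ne {θ : ℝ} (hθ : θ ∈ vals t y) : ((slev t y θ).card : ℝ) ≠ 0 := by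
  have := Finset.card_pos.2 (slev_nonempty hθ)
  positivity

theorem Bf_Gf (h : KPt A t y) : Bf (Gf y) = y := by
  funext v
  have hsum : Bf (Gf y) v =
      ∑ s ∈ chainOf t y, if v ∈ s then Gf y s / s.card else 0 := by
    refine finsum_eq_sum_of_support_subset _ (fun s hs => ?_)
    simp only [Function.mem_support] at hs
    by_cases hmem : v ∈ s
    · rw [if_pos hmem] at hs
      have : Gf y s ≠ 0 := fun h0 => hs (by rw [h0]; simp)
      exact Finset.mem_coe.2 (Gf_support h this)
    · rw [if_neg hmem] at hs; exact absurd rfl hs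
  rw [hsum, chainOf, Finset.sum_image (fun a ha b hb hab => slev_injOn h ha hb hab)]
  by_cases hv : v ∈ posSupp t y
  · have hvv : y v ∈ vals t y := Finset.mem_image_of_mem y hv
    have hterm : ∀ θ ∈ vals t y,
        (if v ∈ slev t y θ then Gf y (slev t y θ) / (slev t y θ).card else 0) =
        (if θ ≤ y v then θ - predW (vals t y) θ else 0) := by
      intro θ hθ
      have hiff : v ∈ slev t y θ ↔ θ ≤ y v := by
        rw [mem_slev]
        exact ⟨fun hh => hh.2, fun hh => ⟨hv, hh⟩⟩
      by_cases hle : θ ≤ y v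
      · rw [if_pos (hiff.2 hle), if_pos hle, Gf_slev h hθ]
        rw [mul_comm, mul_div_assoc, div_self (slev_card_ne hθ), mul_one]
      · rw [if_neg (fun hh => hle (hiff.1 hh)), if_neg hle]
    rw [Finset.sum_congr rfl hterm, ← Finset.sum_filter]
    exact telescope_sum (vals t y) (fun θ hθ => vals_pos hθ) (y v) hvv
  · have : ∀ θ ∈ vals t y,
        (if v ∈ slev t y θ then Gf y (slev t y θ) / (slev t y θ).card else 0) = 0 := by
      intro θ hθ
      rw [if_neg (fun hh => hv (mem_slev.1 hh).1)]
    rw [Finset.sum_congr rfl this, Finset.sum_const, smul_zero, zero_of_not_posSupp h hv]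

theorem sum_chainOf_Gf (h : KPt A t y) : ∑ s ∈ chainOf t y, Gf y s = 1 := by
  rw [chainOf, Finset.sum_image (fun a ha b hb hab => slev_injOn h ha hb hab)]
  have step1 : ∀ θ ∈ vals t y, Gf y (slev t y θ) =
      ∑ v ∈ posSupp t y, if θ ≤ y v then θ - predW (vals t y) θ else 0 := by
    intro θ hθ
    rw [Gf_slev h hθ, ← Finset.sum_filter]
    rw [Finset.sum_const, nsmul_eq_mul]
    rfl
  rw [Finset.sum_congr rfl step1, Finset.sum_comm]
  have step2 : ∀ v ∈ posSupp t y,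
      (∑ θ ∈ vals t y, if θ ≤ y v then θ - predW (vals t y) θ else 0) = y v := by
    intro v hv
    rw [← Finset.sum_filter]
    exact telescope_sum (vals t y) (fun θ hθ => vals_pos hθ) (y v)
      (Finset.mem_image_of_mem y hv)
  rw [Finset.sum_congr rfl step2, sum_posSupp h]

theorem Gf_nonneg (h : KPt A t y) (s : Finset V) : 0 ≤ Gf y s := by
  rw [Gf]
  positivity

theorem slev_subset_t {θ : ℝ} : slev t y θ ⊆ t := fun v hv =>
  Finset.mem_filter.1 (Finset.mem_filter.1 hv).1 |>.1

theorem chainOf_mem_sd (h : KPt A t y) : chainOf t y ∈ (sd A).faces := by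
  refine ⟨?_, ?_, ?_⟩
  · intro s hs
    obtain ⟨θ, hθ, rfl⟩ := Finset.mem_image.1 hs
    exact A.down_closed t h.face _ slev_subset_t (slev_nonempty hθ)
  · rintro a ha b hb hab
    obtain ⟨θa, hθa, rfl⟩ := Finset.mem_image.1 (Finset.mem_coe.1 ha)
    obtain ⟨θb, hθb, rfl⟩ := Finset.mem_image.1 (Finset.mem_coe.1 hb)
    rcases le_total θa θb with hle | hle
    · right
      intro v hv
      exact mem_slev.2 ⟨(mem_slev.1 hv).1, hle.trans (mem_slev.1 hv).2⟩
    · left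
      intro v hv
      exact mem_slev.2 ⟨(mem_slev.1 hv).1, hle.trans (mem_slev.1 hv).2⟩
  · obtain ⟨v, hv, hpos⟩ := h.exists_pos
    exact ⟨slev t y (y v), Finset.mem_image_of_mem _
      (Finset.mem_image_of_mem y (Finset.mem_filter.2 ⟨hv, hpos⟩))⟩

theorem CPt_Gf {K L : ASC V} (h : DPt K L t y) : CPt K L (chainOf t y) (Gf y) := by
  obtain ⟨vs, hvsL, hvsmax⟩ := h.vstar
  refine ⟨⟨chainOf_mem_sd h.kp, vs, hvsL, ?_⟩, Gf_nonneg h.kp, ?_, sum_chainOf_Gf h.kp⟩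
  · intro s hs
    obtain ⟨θ, hθ, rfl⟩ := Finset.mem_image.1 hs
    have hθpos : 0 < θ := vals_pos hθ
    obtain ⟨u, hu, rfl⟩ := Finset.mem_image.1 hθ
    have hyvs : y u ≤ y vs := hvsmax u
    have hvspos : 0 < y vs := lt_of_lt_of_le hθpos hyvs
    have hvst : vs ∈ t := by
      by_contra hcon
      rw [h.kp.zero vs hcon] at hvspos
      norm_num at hvspos
    exact mem_slev.2 ⟨Finset.mem_filter.2 ⟨hvst, hvspos⟩, hyvs⟩
  · intro s hs
    by_contra hcon
    exact hs (Gf_support h.kp hcon)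

end Superlevel

/-! ### From a point of the subdivision to a point of `|K|`, and `G ∘ B = id`. -/

section ChainPt

variable {K L : ASC V} {c : Finset (Finset V)} {x : Finset V → ℝ}

/-- The positive support of a subdivision point. -/
def cposSupp (c : Finset (Finset V)) (x : Finset V → ℝ) : Finset (Finset V) :=
  c.filter (fun s => 0 < x s)

theorem CPt.chain (hc : CPt K L c x) : IsChain (· ⊆ ·) (↑c : Set (Finset V)) :=
  hc.facebst.1.2.1

theorem CPt.mem_faces (hc : CPt K L c x) {i : Finset V} (hi : i ∈ c) : i ∈ K.faces :=
  hc.facebst.1.1 i hi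

theorem CPt.zero_of_not_cposSupp (hc : CPt K L c x) {s : Finset V}
    (hs : s ∉ cposSupp c x) : x s = 0 := by
  by_cases hsc : s ∈ c
  · rcases lt_or_eq_of_le (hc.nonneg s) with hpos | hz
    · exact absurd (Finset.mem_filter.2 ⟨hsc, hpos⟩) hs
    · exact hz.symm
  · exact hc.zero s hsc

theorem CPt.sum_cposSupp (hc : CPt K L c x) : ∑ s ∈ cposSupp c x, x s = 1 := by
  rw [← hc.sum]
  exact Finset.sum_filter_of_ne (fun s _ hs => lt_of_le_of_ne (hc.nonneg s) (Ne.symm hs))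

theorem CPt.cposSupp_nonempty (hc : CPt K L c x) : (cposSupp c x).Nonempty := by
  by_contra hcon
  rw [Finset.not_nonempty_iff_eq_empty] at hcon
  have := hc.sum_cposSupp
  rw [hcon, Finset.sum_empty] at this
  norm_num at this

theorem CPt.cpos_chain (hc : CPt K L c x) :
    IsChain (· ⊆ ·) (↑(cposSupp c x) : Set (Finset V)) :=
  hc.chain.mono (fun s hs =>
    Finset.mem_coe.2 (Finset.filter_subset _ _ (Finset.mem_coe.1 hs)))

theorem Bf_eq_sum (hc : CPt K L c x) (v : V) :
    Bf x v = ∑ i ∈ cposSupp c x, if v ∈ i then x i / i.card else 0 := by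
  refine finsum_eq_sum_of_support_subset _ (fun s hs => ?_)
  simp only [Function.mem_support] at hs
  by_cases hmem : v ∈ s
  · rw [if_pos hmem] at hs
    have : x s ≠ 0 := fun h0 => hs (by rw [h0]; simp)
    exact Finset.mem_coe.2 (Finset.mem_filter.2
      ⟨by_contra fun hsc => this (hc.zero s hsc),
        lt_of_le_of_ne (hc.nonneg s) (Ne.symm this)⟩)
  · rw [if_neg hmem] at hs; exact absurd rfl hs

theorem Bf_nonneg (hc : CPt K L c x) (v : V) : 0 ≤ Bf x v := by
  rw [Bf_eq_sum hc]
  refine Finset.sum_nonneg fun i _ => ?_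
  by_cases hv : v ∈ i <;> simp [hv]
  exact div_nonneg (hc.nonneg i) (Nat.cast_nonneg _)

theorem Bf_le_one (hc : CPt K L c x) (v : V) : Bf x v ≤ 1 := by
  rw [Bf_eq_sum hc, ← hc.sum_cposSupp]
  refine Finset.sum_le_sum fun i hi => ?_
  have hcard : (1:ℝ) ≤ i.card := by
    have : i.Nonempty := K.nonempty_of_mem i (hc.mem_faces (Finset.mem_filter.1 hi).1)
    exact_mod_cast Finset.card_pos.2 this
  by_cases hv : v ∈ i
  · rw [if_pos hv]
    calc x i / i.card ≤ x i / 1 := by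
          apply div_le_div_of_nonneg_left (hc.nonneg i) <;> linarith
    _ = x i := div_one _
  · rw [if_neg hv]; exact hc.nonneg i

theorem cpos_mem_faces (hc : CPt K L c x) {i : Finset V} (hi : i ∈ cposSupp c x) :
    i ∈ K.faces := hc.mem_faces (Finset.filter_subset _ _ hi)

theorem cpos_card_ne (hc : CPt K L c x) {i : Finset V} (hi : i ∈ cposSupp c x) :
    ((i.card : ℝ)) ≠ 0 := by
  have := Finset.card_pos.2 (K.nonempty_of_mem i (cpos_mem_faces hc hi))
  positivity

theorem Bf_filter_eq (hc : CPt K L c x) (v : V) :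
    Bf x v = ∑ i ∈ (cposSupp c x).filter (fun i => v ∈ i), x i / i.card := by
  rw [Bf_eq_sum hc, ← Finset.sum_filter]

theorem sum_div_mono (hc : CPt K L c x) {P Q : Finset (Finset V)}
    (hPQ : P ⊆ Q) : ∑ i ∈ P, x i / i.card ≤ ∑ i ∈ Q, x i / i.card :=
  Finset.sum_le_sum_of_subset_of_nonneg hPQ
    (fun i _ _ => div_nonneg (hc.nonneg i) (Nat.cast_nonneg _))

theorem cpos_comp (hc : CPt K L c x) {i j : Finset V} (hi : i ∈ cposSupp c x)
    (hj : j ∈ cposSupp c x) : i ⊆ j ∨ j ⊆ i := by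
  rcases eq_or_ne i j with rfl | hne
  · exact Or.inl (Finset.Subset.refl _)
  · exact hc.cpos_chain (Finset.mem_coe.2 hi) (Finset.mem_coe.2 hj) hne

theorem DPt_Bf (hc : CPt K L c x) : ∃ T ∈ c, DPt K L T (Bf x) := by
  obtain ⟨T, hT, hTmax⟩ := chain_greatest hc.cpos_chain hc.cposSupp_nonempty
  obtain ⟨v₀, hv₀L, hv₀all⟩ := hc.facebst.2
  have hTc : T ∈ c := Finset.filter_subset _ _ hT
  refine ⟨T, hTc, ⟨⟨hc.mem_faces hTc, Bf_nonneg hc, ?_, ?_⟩, v₀, hv₀L, ?_⟩⟩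
  · intro v hv
    rw [Bf_filter_eq hc]
    rw [Finset.filter_eq_empty_iff.2 (fun {i} hi hvi => hv (hTmax i hi hvi))]
    exact Finset.sum_empty
  · have hswap : ∑ v ∈ T, Bf x v =
        ∑ i ∈ cposSupp c x, ∑ v ∈ T, (if v ∈ i then x i / i.card else 0) := by
      rw [← Finset.sum_comm]
      exact Finset.sum_congr rfl (fun v _ => Bf_eq_sum hc v)
    rw [hswap]
    have hinner : ∀ i ∈ cposSupp c x,
        (∑ v ∈ T, if v ∈ i then x i / i.card else 0) = x i := by
      intro i hi
      rw [← Finset.sum_filter, Finset.filter_mem_eq_inter,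
        Finset.inter_eq_right.2 (hTmax i hi), Finset.sum_const, nsmul_eq_mul,
        mul_comm, div_mul_cancel₀ _ (cpos_card_ne hc hi)]
    rw [Finset.sum_congr rfl hinner, hc.sum_cposSupp]
  · intro w
    rw [Bf_filter_eq hc, Bf_filter_eq hc]
    refine le_trans (sum_div_mono hc (Finset.filter_subset _ _)) ?_
    exact sum_div_mono hc (fun i hi =>
      Finset.mem_filter.2 ⟨hi, hv₀all i (Finset.filter_subset _ _ hi)⟩)

/-- The mass lying on faces of the chain above `j`. -/
def thF (c : Finset (Finset V)) (x : Finset V → ℝ) (j : Finset V) : ℝ :=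
  ∑ i ∈ (cposSupp c x).filter (fun i => j ⊆ i), x i / i.card

/-- The mass lying on faces of the chain strictly above `j`. -/
def thS (c : Finset (Finset V)) (x : Finset V → ℝ) (j : Finset V) : ℝ :=
  ∑ i ∈ (cposSupp c x).filter (fun i => j ⊆ i ∧ ¬ i ⊆ j), x i / i.card

theorem exists_le_thF (hc : CPt K L c x) {s j₀ : Finset V} (hs : s.Nonempty)
    (hj₀ : j₀ ∈ cposSupp c x) (hsj : s ⊆ j₀)
    (hmin : ∀ i ∈ cposSupp c x, s ⊆ i → j₀ ⊆ i) :
    ∃ v ∈ s, Bf x v ≤ thF c x j₀ := by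
  have key : ∀ v ∈ s, (∀ i ∈ cposSupp c x, v ∈ i → j₀ ⊆ i) →
      Bf x v ≤ thF c x j₀ := by
    intro v _ hv
    rw [Bf_filter_eq hc, thF]
    refine sum_div_mono hc (fun i hi => ?_)
    obtain ⟨hic, hvi⟩ := Finset.mem_filter.1 hi
    exact Finset.mem_filter.2 ⟨hic, hv i hic hvi⟩
  rcases ((cposSupp c x).filter (fun i => i ⊆ j₀ ∧ i ≠ j₀)).eq_empty_or_nonempty
    with hbe | hbne
  · obtain ⟨v, hv⟩ := hs
    refine ⟨v, hv, key v hv (fun i hi hvi => ?_)⟩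
    rcases cpos_comp hc hi hj₀ with h | h
    · rcases eq_or_ne i j₀ with rfl | hne
      · exact Finset.Subset.refl _
      · have hmem : i ∈ (cposSupp c x).filter (fun i => i ⊆ j₀ ∧ i ≠ j₀) :=
          Finset.mem_filter.2 ⟨hi, ⟨h, hne⟩⟩
        rw [hbe] at hmem
        exact absurd hmem (Finset.notMem_empty _)
    · exact h
  · have hbchain : IsChain (· ⊆ ·)
        (↑((cposSupp c x).filter (fun i => i ⊆ j₀ ∧ i ≠ j₀)) : Set (Finset V)) :=
      hc.cpos_chain.mono (fun i hi =>
        Finset.mem_coe.2 (Finset.filter_subset _ _ (Finset.mem_coe.1 hi)))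
    obtain ⟨U, hU, hUmax⟩ := chain_greatest hbchain hbne
    obtain ⟨hUc, hUj₀, hUne⟩ := Finset.mem_filter.1 hU
    have hsU : ¬ s ⊆ U := by
      intro hcon
      have := hmin U hUc hcon
      exact hUne (Finset.Subset.antisymm hUj₀ this)
    obtain ⟨v, hv, hvU⟩ := Finset.not_subset.1 hsU
    refine ⟨v, hv, key v hv (fun i hi hvi => ?_)⟩
    rcases cpos_comp hc hi hj₀ with h | h
    · rcases eq_or_ne i j₀ with rfl | hne
      · exact Finset.Subset.refl _
      · exact absurd (hUmax i (Finset.mem_filter.2 ⟨hi, ⟨h, hne⟩⟩) hvi) hvU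
    · exact h

theorem thF_le_Bf (hc : CPt K L c x) {j : Finset V} {w : V} (hw : w ∈ j) :
    thF c x j ≤ Bf x w := by
  rw [Bf_filter_eq hc, thF]
  refine sum_div_mono hc (fun i hi => ?_)
  obtain ⟨hic, hji⟩ := Finset.mem_filter.1 hi
  exact Finset.mem_filter.2 ⟨hic, hji hw⟩

theorem Bf_le_thS (hc : CPt K L c x) {s : Finset V} (hs : s ∈ cposSupp c x)
    {w : V} (hw : w ∉ s) : Bf x w ≤ thS c x s := by
  rw [Bf_filter_eq hc, thS]
  refine sum_div_mono hc (fun i hi => ?_)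
  obtain ⟨hic, hwi⟩ := Finset.mem_filter.1 hi
  have hnis : ¬ i ⊆ s := fun hcon => hw (hcon hwi)
  rcases cpos_comp hc hic hs with h | h
  · exact absurd h hnis
  · exact Finset.mem_filter.2 ⟨hic, h, hnis⟩

theorem thS_nonneg (hc : CPt K L c x) (j : Finset V) : 0 ≤ thS c x j :=
  Finset.sum_nonneg (fun i _ => div_nonneg (hc.nonneg i) (Nat.cast_nonneg _))

theorem thF_sub_thS (hc : CPt K L c x) {s : Finset V} (hs : s ∈ cposSupp c x) :
    thF c x s = x s / s.card + thS c x s := by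
  rw [thF, thS]
  have hsplit : (cposSupp c x).filter (fun i => s ⊆ i) =
      insert s ((cposSupp c x).filter (fun i => s ⊆ i ∧ ¬ i ⊆ s)) := by
    ext i
    simp only [Finset.mem_filter, Finset.mem_insert]
    constructor
    · rintro ⟨hic, hsi⟩
      by_cases his : i ⊆ s
      · exact Or.inl (Finset.Subset.antisymm his hsi)
      · exact Or.inr ⟨hic, hsi, his⟩
    · rintro (rfl | ⟨hic, hsi, _⟩)
      · exact ⟨hs, Finset.Subset.refl _⟩
      · exact ⟨hic, hsi⟩
  rw [hsplit, Finset.sum_insert (by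
    simp only [Finset.mem_filter, not_and]
    intro _ _ hcon
    exact hcon (Finset.Subset.refl _))]

theorem Gf_Bf (hc : CPt K L c x) : Gf (Bf x) = x := by
  funext s
  by_cases hs : s ∈ cposSupp c x
  · -- on the chain, `Gf (Bf x) s = x s`
    have hsne : s.Nonempty := K.nonempty_of_mem s (cpos_mem_faces hc hs)
    have hmf : mf (Bf x) s = thF c x s := by
      refine le_antisymm ?_ (le_mf hsne (fun v hv => thF_le_Bf hc hv))
      have hfne : ((cposSupp c x).filter (fun i => s ⊆ i)).Nonempty :=
        ⟨s, Finset.mem_filter.2 ⟨hs, Finset.Subset.refl _⟩⟩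
      have hfchain : IsChain (· ⊆ ·)
          (↑((cposSupp c x).filter (fun i => s ⊆ i)) : Set (Finset V)) :=
        hc.cpos_chain.mono (fun i hi =>
          Finset.mem_coe.2 (Finset.filter_subset _ _ (Finset.mem_coe.1 hi)))
      obtain ⟨j₀, hj₀, hj₀min⟩ := chain_least hfchain hfne
      obtain ⟨hj₀c, hsj₀⟩ := Finset.mem_filter.1 hj₀
      have hj₀s : j₀ = s := Finset.Subset.antisymm
        (hj₀min s (Finset.mem_filter.2 ⟨hs, Finset.Subset.refl _⟩)) hsj₀
      obtain ⟨v, hv, hle⟩ := exists_le_thF hc hsne hj₀c hsj₀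
        (fun i hi hsi => hj₀min i (Finset.mem_filter.2 ⟨hi, hsi⟩))
      rw [hj₀s] at hle
      exact le_trans (mf_le hv) hle
    have hNf : Nf (Bf x) s = thS c x s := by
      refine le_antisymm (Nf_le (thS_nonneg hc s) (fun w hw => Bf_le_thS hc hs hw)) ?_
      rcases ((cposSupp c x).filter (fun i => s ⊆ i ∧ ¬ i ⊆ s)).eq_empty_or_nonempty
        with hge | hgne
      · rw [thS, hge, Finset.sum_empty]
        exact Nf_nonneg (Bf_nonneg hc) (Bf_le_one hc)
      · have hgchain : IsChain (· ⊆ ·)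
            (↑((cposSupp c x).filter (fun i => s ⊆ i ∧ ¬ i ⊆ s)) : Set (Finset V)) :=
          hc.cpos_chain.mono (fun i hi =>
            Finset.mem_coe.2 (Finset.filter_subset _ _ (Finset.mem_coe.1 hi)))
        obtain ⟨i₀, hi₀, hi₀min⟩ := chain_least hgchain hgne
        obtain ⟨hi₀c, hsi₀, hi₀ns⟩ := Finset.mem_filter.1 hi₀
        obtain ⟨w, hwi₀, hws⟩ := Finset.not_subset.1 hi₀ns
        have h1 : thS c x s ≤ Bf x w := by
          rw [Bf_filter_eq hc, thS]
          refine sum_div_mono hc (fun i hi => ?_)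
          obtain ⟨hic, _⟩ := Finset.mem_filter.1 hi
          exact Finset.mem_filter.2 ⟨hic, hi₀min i hi hwi₀⟩
        exact le_trans h1 (le_Nf (Bf_le_one hc) hws)
    have hcardne : ((s.card : ℝ)) ≠ 0 := cpos_card_ne hc hs
    rw [Gf, hmf, hNf, thF_sub_thS hc hs]
    have : x s / ↑s.card + thS c x s - thS c x s = x s / ↑s.card := by ring
    rw [this, max_eq_left (div_nonneg (hc.nonneg s) (Nat.cast_nonneg _)),
      mul_comm, div_mul_cancel₀ _ hcardne]
  · -- off the chain, both sides vanish
    rw [hc.zero_of_not_cposSupp hs]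
    rcases Finset.eq_empty_or_nonempty s with rfl | hsne
    · simp [Gf]
    · have hmN : mf (Bf x) s ≤ Nf (Bf x) s := by
        rcases ((cposSupp c x).filter (fun i => s ⊆ i)).eq_empty_or_nonempty
          with hfe | hfne
        · -- `s` sticks out of the whole chain
          obtain ⟨T, hT, hTmax⟩ := chain_greatest hc.cpos_chain hc.cposSupp_nonempty
          have hsT : ¬ s ⊆ T := by
            intro hcon
            have hmem : T ∈ (cposSupp c x).filter (fun i => s ⊆ i) :=
              Finset.mem_filter.2 ⟨hT, hcon⟩
            rw [hfe] at hmem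
            exact absurd hmem (Finset.notMem_empty _)
          obtain ⟨v, hv, hvT⟩ := Finset.not_subset.1 hsT
          have hBv : Bf x v = 0 := by
            rw [Bf_filter_eq hc,
              Finset.filter_eq_empty_iff.2 (fun {i} hi hvi => hvT (hTmax i hi hvi)),
              Finset.sum_empty]
          calc mf (Bf x) s ≤ Bf x v := mf_le hv
          _ = 0 := hBv
          _ ≤ Nf (Bf x) s := Nf_nonneg (Bf_nonneg hc) (Bf_le_one hc)
        · have hfchain : IsChain (· ⊆ ·)
              (↑((cposSupp c x).filter (fun i => s ⊆ i)) : Set (Finset V)) :=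
            hc.cpos_chain.mono (fun i hi =>
              Finset.mem_coe.2 (Finset.filter_subset _ _ (Finset.mem_coe.1 hi)))
          obtain ⟨j₀, hj₀, hj₀min⟩ := chain_least hfchain hfne
          obtain ⟨hj₀c, hsj₀⟩ := Finset.mem_filter.1 hj₀
          have hsnej₀ : s ≠ j₀ := fun hcon => hs (hcon ▸ hj₀c)
          obtain ⟨w, hwj₀, hws⟩ := Finset.not_subset.1
            (fun hcon => hsnej₀ (Finset.Subset.antisymm hsj₀ hcon) : ¬ j₀ ⊆ s)
          obtain ⟨v, hv, hle⟩ := exists_le_thF hc hsne hj₀c hsj₀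
            (fun i hi hsi => hj₀min i (Finset.mem_filter.2 ⟨hi, hsi⟩))
          calc mf (Bf x) s ≤ Bf x v := mf_le hv
          _ ≤ thF c x j₀ := hle
          _ ≤ Bf x w := thF_le_Bf hc hwj₀
          _ ≤ Nf (Bf x) s := le_Nf (Bf_le_one hc) hws
      rw [Gf, max_eq_right (sub_nonpos.2 hmN), mul_zero]

end ChainPt

/-! ### The projection part -/

section Proj

variable {K L : ASC V} {t : Finset V} {y : V → ℝ}

theorem Sf_eq_sum {A : ASC V} (h : KPt A t y) :
    Sf L y = ∑ v ∈ t.filter (fun v => ({v} : Finset V) ∈ L.faces), y v := by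
  have hsum : Sf L y = ∑ v ∈ t.filter (fun v => ({v} : Finset V) ∈ L.faces),
      (if ({v} : Finset V) ∈ L.faces then y v else 0) := by
    refine finsum_eq_sum_of_support_subset _ (fun v hv => ?_)
    simp only [Function.mem_support] at hv
    by_cases hvL : ({v} : Finset V) ∈ L.faces
    · rw [if_pos hvL] at hv
      refine Finset.mem_coe.2 (Finset.mem_filter.2 ⟨?_, hvL⟩)
      by_contra hvt
      exact hv (h.zero v hvt)
    · rw [if_neg hvL] at hv; exact absurd rfl hv
  rw [hsum]
  exact Finset.sum_congr rfl (fun v hv => if_pos (Finset.mem_filter.1 hv).2)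

theorem Sf_nonneg' {A : ASC V} (h : KPt A t y) : 0 ≤ Sf L y := by
  rw [Sf_eq_sum h]
  exact Finset.sum_nonneg (fun v _ => h.nonneg v)

theorem Sf_le_one {A : ASC V} (h : KPt A t y) : Sf L y ≤ 1 := by
  rw [Sf_eq_sum h, ← h.sum]
  exact Finset.sum_le_sum_of_subset_of_nonneg (Finset.filter_subset _ _)
    (fun v _ _ => h.nonneg v)

theorem DPt.vstar_struct (h : DPt K L t y) :
    ∃ v, ({v} : Finset V) ∈ L.faces ∧ (∀ w, y w ≤ y v) ∧ v ∈ t ∧ 0 < y v ∧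
      1 / (t.card : ℝ) ≤ y v := by
  obtain ⟨vs, hvsL, hvsmax⟩ := h.vstar
  obtain ⟨u, _, hupos⟩ := h.kp.exists_pos
  have hpos : 0 < y vs := lt_of_lt_of_le hupos (hvsmax u)
  have hvst : vs ∈ t := by
    by_contra hcon
    rw [h.kp.zero vs hcon] at hpos
    norm_num at hpos
  exact ⟨vs, hvsL, hvsmax, hvst, hpos, h.kp.max_ge_inv_card hvsmax⟩

theorem inv_card_le_Sf (h : DPt K L t y) : 1 / (t.card : ℝ) ≤ Sf L y := by
  obtain ⟨vs, hvsL, _, hvst, _, hinv⟩ := h.vstar_struct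
  refine le_trans hinv ?_
  rw [Sf_eq_sum h.kp]
  exact Finset.single_le_sum (fun v _ => h.kp.nonneg v)
    (Finset.mem_filter.2 ⟨hvst, hvsL⟩)

theorem Sf_pos (h : DPt K L t y) : 0 < Sf L y := by
  have h1 : (0:ℝ) < t.card := by exact_mod_cast h.kp.card_pos
  calc (0:ℝ) < 1 / t.card := by positivity
  _ ≤ Sf L y := inv_card_le_Sf h

theorem Pf_zero (y : V → ℝ) : Pf L 0 y = y := by
  funext v; simp [Pf]

theorem Pf_one (y : V → ℝ) : Pf L 1 y = Qf L y := by
  funext v; simp [Pf]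

theorem Qf_nonneg (h : DPt K L t y) (v : V) : 0 ≤ Qf L y v := by
  rw [Qf]
  by_cases hvL : ({v} : Finset V) ∈ L.faces
  · rw [if_pos hvL]; exact div_nonneg (h.kp.nonneg v) (Sf_pos h).le
  · rw [if_neg hvL]

theorem Qf_zero (h : DPt K L t y) {v : V} (hv : v ∉ t) : Qf L y v = 0 := by
  rw [Qf, h.kp.zero v hv]
  by_cases hvL : ({v} : Finset V) ∈ L.faces <;> simp [hvL]

theorem Qf_le (h : DPt K L t y) (v : V) : Qf L y v ≤ y v / Sf L y := by
  rw [Qf]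
  by_cases hvL : ({v} : Finset V) ∈ L.faces
  · rw [if_pos hvL]
  · rw [if_neg hvL]
    exact div_nonneg (h.kp.nonneg v) (Sf_pos h).le

theorem sum_Qf_filter (h : DPt K L t y) :
    ∑ v ∈ t.filter (fun v => ({v} : Finset V) ∈ L.faces), Qf L y v = 1 := by
  have : ∀ v ∈ t.filter (fun v => ({v} : Finset V) ∈ L.faces),
      Qf L y v = y v / Sf L y := by
    intro v hv
    rw [Qf, if_pos (Finset.mem_filter.1 hv).2]
  rw [Finset.sum_congr rfl this, ← Finset.sum_div, ← Sf_eq_sum h.kp,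
    div_self (Sf_pos h).ne']

theorem sum_Qf_t (h : DPt K L t y) : ∑ v ∈ t, Qf L y v = 1 := by
  rw [← sum_Qf_filter h]
  refine (Finset.sum_filter_of_ne (fun v hv hne => ?_)).symm
  by_contra hvL
  exact hne (by rw [Qf, if_neg hvL])

theorem DPt_Pf (h : DPt K L t y) {τ : ℝ} (h0 : 0 ≤ τ) (h1 : τ ≤ 1) :
    DPt K L t (Pf L τ y) := by
  obtain ⟨vs, hvsL, hvsmax, hvst, hvspos, _⟩ := h.vstar_struct
  have hS := Sf_pos h
  refine ⟨⟨h.kp.face, ?_, ?_, ?_⟩, vs, hvsL, ?_⟩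
  · intro v
    have := h.kp.nonneg v
    have := Qf_nonneg h v
    rw [Pf]
    nlinarith
  · intro v hv
    rw [Pf, h.kp.zero v hv, Qf_zero h hv]
    ring
  · simp only [Pf]
    rw [Finset.sum_add_distrib, ← Finset.mul_sum, ← Finset.mul_sum, h.kp.sum,
      sum_Qf_t h]
    ring
  · intro w
    have hQ : Qf L y w ≤ Qf L y vs := by
      have hQvs : Qf L y vs = y vs / Sf L y := by rw [Qf, if_pos hvsL]
      rw [hQvs]
      refine le_trans (Qf_le h w) ?_
      gcongr
      exact hvsmax w
    have hy : y w ≤ y vs := hvsmax w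
    rw [Pf, Pf]
    nlinarith

theorem Pf_eq_self {s : Finset V} (hs : KPt L s y) (τ : ℝ) : Pf L τ y = y := by
  have hfil : s.filter (fun v => ({v} : Finset V) ∈ L.faces) = s :=
    Finset.filter_true_of_mem (fun v hv =>
      L.down_closed s hs.face {v} (Finset.singleton_subset_iff.2 hv)
        (Finset.singleton_nonempty v))
  have hSf : Sf L y = 1 := by
    rw [Sf_eq_sum (L := L) hs, hfil, hs.sum]
  have hQ : Qf L y = y := by
    funext v
    rw [Qf]
    by_cases hvL : ({v} : Finset V) ∈ L.faces
    · rw [if_pos hvL, hSf, div_one]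
    · rw [if_neg hvL]
      refine (hs.zero v (fun hvs => ?_)).symm
      exact hvL (L.down_closed s hs.face {v}
        (Finset.singleton_subset_iff.2 hvs) (Finset.singleton_nonempty v))
  funext v
  rw [Pf, hQ]
  ring

theorem KPt_L_Pf_one (hL : IsFullSub K L) (h : DPt K L t y) :
    KPt L (t.filter (fun v => ({v} : Finset V) ∈ L.faces)) (Pf L 1 y) := by
  obtain ⟨vs, hvsL, hvsmax, hvst, hvspos, _⟩ := h.vstar_struct
  have hfK : t.filter (fun v => ({v} : Finset V) ∈ L.faces) ∈ K.faces :=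
    K.down_closed t h.kp.face _ (Finset.filter_subset _ _)
      ⟨vs, Finset.mem_filter.2 ⟨hvst, hvsL⟩⟩
  refine ⟨hL.2 _ hfK (fun v hv => (Finset.mem_filter.1 hv).2), ?_, ?_, ?_⟩
  · intro v
    rw [Pf_one]
    exact Qf_nonneg h v
  · intro v hv
    rw [Pf_one, Qf]
    by_cases hvL : ({v} : Finset V) ∈ L.faces
    · rw [if_pos hvL]
      have hvt : v ∉ t := fun hvt => hv (Finset.mem_filter.2 ⟨hvt, hvL⟩)
      rw [h.kp.zero v hvt, zero_div]
    · rw [if_neg hvL]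
  · rw [Pf_one]
    exact sum_Qf_filter h

theorem DPt_of_KPt_L {s : Finset V} (hL : IsFullSub K L) (hs : KPt L s y) :
    DPt K L s y := by
  obtain ⟨v₁, hv₁s, hv₁max⟩ := Finset.exists_max_image s y
    (L.nonempty_of_mem s hs.face)
  refine ⟨⟨hL.1 hs.face, hs.nonneg, hs.zero, hs.sum⟩, v₁, ?_, ?_⟩
  · exact L.down_closed s hs.face {v₁}
      (Finset.singleton_subset_iff.2 hv₁s) (Finset.singleton_nonempty v₁)
  · intro w
    by_cases hws : w ∈ s
    · exact hv₁max w hws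
    · rw [hs.zero w hws]
      exact le_trans (hs.nonneg v₁) (hv₁max v₁ hv₁s)

end Proj

/-! ### Quantitative (Lipschitz-type) estimates -/

section Estimates

variable {K L : ASC V}

theorem Bf_est {c c' : Finset (Finset V)} {x x' : Finset V → ℝ} {n : ℕ} {d : ℝ}
    (hc : CPt K L c x) (hc' : CPt K L c' x') (hd : 0 ≤ d)
    (hcard : ∀ i ∈ c, i.card ≤ n) (hcard' : ∀ i ∈ c', i.card ≤ n)
    (hdiff : ∀ s, |x s - x' s| ≤ d) (v : V) :
    |Bf x v - Bf x' v| ≤ 2 * n * d := by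
  have hface : ∀ i ∈ cposSupp c x ∪ cposSupp c' x', (1:ℝ) ≤ i.card := by
    intro i hi
    rcases Finset.mem_union.1 hi with h | h
    · exact_mod_cast Finset.card_pos.2 (K.nonempty_of_mem i (cpos_mem_faces hc h))
    · exact_mod_cast Finset.card_pos.2 (K.nonempty_of_mem i (cpos_mem_faces hc' h))
  have hx : Bf x v = ∑ i ∈ cposSupp c x ∪ cposSupp c' x',
      if v ∈ i then x i / i.card else 0 := by
    rw [Bf_eq_sum hc]
    refine Finset.sum_subset Finset.subset_union_left (fun i _ hinot => ?_)
    rw [hc.zero_of_not_cposSupp hinot]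
    simp
  have hx' : Bf x' v = ∑ i ∈ cposSupp c x ∪ cposSupp c' x',
      if v ∈ i then x' i / i.card else 0 := by
    rw [Bf_eq_sum hc']
    refine Finset.sum_subset Finset.subset_union_right (fun i _ hinot => ?_)
    rw [hc'.zero_of_not_cposSupp hinot]
    simp
  rw [hx, hx', ← Finset.sum_sub_distrib]
  refine le_trans (Finset.abs_sum_le_sum_abs _ _) ?_
  have hbound : ∀ i ∈ cposSupp c x ∪ cposSupp c' x',
      |(if v ∈ i then x i / i.card else 0) - (if v ∈ i then x' i / i.card else 0)|
        ≤ d := by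
    intro i hi
    by_cases hvi : v ∈ i
    · rw [if_pos hvi, if_pos hvi, div_sub_div_same, abs_div,
        abs_of_nonneg (by positivity : (0:ℝ) ≤ (i.card : ℝ))]
      calc |x i - x' i| / i.card ≤ |x i - x' i| :=
            div_le_self (abs_nonneg _) (hface i hi)
      _ ≤ d := hdiff i
    · rw [if_neg hvi, if_neg hvi, sub_zero, abs_zero]; exact hd
  refine le_trans (Finset.sum_le_sum hbound) ?_
  rw [Finset.sum_const, nsmul_eq_mul]
  have h1 : (cposSupp c x).card ≤ n :=
    chain_card_le hc.cpos_chain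
      (fun i hi => K.nonempty_of_mem i (cpos_mem_faces hc hi))
      (fun i hi => hcard i (Finset.filter_subset _ _ hi))
  have h1' : (cposSupp c' x').card ≤ n :=
    chain_card_le hc'.cpos_chain
      (fun i hi => K.nonempty_of_mem i (cpos_mem_faces hc' hi))
      (fun i hi => hcard' i (Finset.filter_subset _ _ hi))
  have h2 : ((cposSupp c x ∪ cposSupp c' x').card : ℝ) ≤ 2 * n := by
    have := Finset.card_union_le (cposSupp c x) (cposSupp c' x')
    have : (cposSupp c x ∪ cposSupp c' x').card ≤ 2 * n := by omega
    exact_mod_cast this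
  nlinarith

theorem Sf_est {t t' : Finset V} {y y' : V → ℝ} {n : ℕ} {d : ℝ}
    (h : KPt K t y) (h' : KPt K t' y') (hd : 0 ≤ d)
    (hcard : t.card ≤ n) (hcard' : t'.card ≤ n)
    (hdiff : ∀ v, |y v - y' v| ≤ d) :
    |Sf L y - Sf L y'| ≤ 2 * n * d := by
  have hy : Sf L y = ∑ v ∈ (t ∪ t').filter (fun v => ({v} : Finset V) ∈ L.faces),
      y v := by
    rw [Sf_eq_sum (L := L) h]
    refine Finset.sum_subset (Finset.filter_subset_filter _ Finset.subset_union_left)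
      (fun v hv hvnot => ?_)
    refine h.zero v (fun hvt => ?_)
    exact hvnot (Finset.mem_filter.2 ⟨hvt, (Finset.mem_filter.1 hv).2⟩)
  have hy' : Sf L y' = ∑ v ∈ (t ∪ t').filter (fun v => ({v} : Finset V) ∈ L.faces),
      y' v := by
    rw [Sf_eq_sum (L := L) h']
    refine Finset.sum_subset (Finset.filter_subset_filter _ Finset.subset_union_right)
      (fun v hv hvnot => ?_)
    refine h'.zero v (fun hvt => ?_)
    exact hvnot (Finset.mem_filter.2 ⟨hvt, (Finset.mem_filter.1 hv).2⟩)
  rw [hy, hy', ← Finset.sum_sub_distrib]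
  refine le_trans (Finset.abs_sum_le_sum_abs _ _) ?_
  refine le_trans (Finset.sum_le_sum (fun v _ => hdiff v)) ?_
  rw [Finset.sum_const, nsmul_eq_mul]
  have h2 : (((t ∪ t').filter (fun v => ({v} : Finset V) ∈ L.faces)).card : ℝ)
      ≤ 2 * n := by
    have ha := Finset.card_filter_le (t ∪ t') (fun v => ({v} : Finset V) ∈ L.faces)
    have hb := Finset.card_union_le t t'
    have : ((t ∪ t').filter (fun v => ({v} : Finset V) ∈ L.faces)).card ≤ 2 * n := by
      omega
    exact_mod_cast this
  nlinarith

theorem Pf_est {t t' : Finset V} {y y' : V → ℝ} {n : ℕ} {d : ℝ} {τ τ' : ℝ}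
    (h : DPt K L t y) (h' : DPt K L t' y') (hd : 0 ≤ d)
    (hn : 1 ≤ n) (hcard : t.card ≤ n) (hcard' : t'.card ≤ n)
    (hτ0 : 0 ≤ τ) (hτ1 : τ ≤ 1) (hτ0' : 0 ≤ τ') (hτ1' : τ' ≤ 1)
    (hdiff : ∀ v, |y v - y' v| ≤ d) (v : V) :
    |Pf L τ y v - Pf L τ' y' v| ≤ (2*(n:ℝ)^3 + 2*n + 2) * (|τ - τ'| + d) := by
  have hnR : (1:ℝ) ≤ n := by exact_mod_cast hn
  have hS : 0 < Sf L y := Sf_pos h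
  have hS' : 0 < Sf L y' := Sf_pos h'
  have hSn : 1 / Sf L y ≤ n := by
    rw [div_le_iff₀ hS]
    have h1 : 1 / (t.card : ℝ) ≤ Sf L y := inv_card_le_Sf h
    have h2 : (0:ℝ) < t.card := by exact_mod_cast h.kp.card_pos
    have h3 : (t.card : ℝ) ≤ n := by exact_mod_cast hcard
    rw [div_le_iff₀ h2] at h1
    nlinarith
  have hSn' : 1 / Sf L y' ≤ n := by
    rw [div_le_iff₀ hS']
    have h1 : 1 / (t'.card : ℝ) ≤ Sf L y' := inv_card_le_Sf h'
    have h2 : (0:ℝ) < t'.card := by exact_mod_cast h'.kp.card_pos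
    have h3 : (t'.card : ℝ) ≤ n := by exact_mod_cast hcard'
    rw [div_le_iff₀ h2] at h1
    nlinarith
  have hSd : |Sf L y - Sf L y'| ≤ 2 * n * d :=
    Sf_est (L := L) h.kp h'.kp hd hcard hcard' hdiff
  have hnS : (1:ℝ) ≤ n * Sf L y := by
    have h9 := hSn; rw [div_le_iff₀ hS] at h9; linarith
  have hnS' : (1:ℝ) ≤ n * Sf L y' := by
    have h9 := hSn'; rw [div_le_iff₀ hS'] at h9; linarith
  have hnpos : (0:ℝ) < n := by linarith
  have h3 : 1 / (n:ℝ) ≤ Sf L y := by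
    rw [div_le_iff₀ hnpos]; nlinarith
  have h4 : 1 / (n:ℝ) ≤ Sf L y' := by
    rw [div_le_iff₀ hnpos]; nlinarith
  -- bound on the difference of the normalized projections
  have hQd : |Qf L y v - Qf L y' v| ≤ (n:ℝ) * d + 2 * (n:ℝ)^3 * d := by
    by_cases hvL : ({v} : Finset V) ∈ L.faces
    · have hq : Qf L y v = y v / Sf L y := by rw [Qf, if_pos hvL]
      have hq' : Qf L y' v = y' v / Sf L y' := by rw [Qf, if_pos hvL]
      rw [hq, hq']
      have key : y v / Sf L y - y' v / Sf L y' =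
          (y v - y' v) / Sf L y + y' v * (Sf L y' - Sf L y) / (Sf L y * Sf L y') := by
        field_simp
        ring
      rw [key]
      refine le_trans (abs_add_le _ _) ?_
      have hb1 : |(y v - y' v) / Sf L y| ≤ (n:ℝ) * d := by
        rw [abs_div, abs_of_pos hS, div_le_iff₀ hS]
        nlinarith [hdiff v, mul_le_mul_of_nonneg_right hnS hd]
      have hb2 : |y' v * (Sf L y' - Sf L y) / (Sf L y * Sf L y')| ≤
          2 * (n:ℝ)^3 * d := by
        rw [abs_div, abs_mul, abs_of_pos (mul_pos hS hS'), div_le_iff₀ (mul_pos hS hS')]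
        have h1 : |y' v| ≤ 1 := by
          rw [abs_of_nonneg (h'.kp.nonneg v)]; exact h'.kp.le_one v
        have h2 : |Sf L y' - Sf L y| ≤ 2 * n * d := by
          rw [abs_sub_comm]; exact hSd
        have h6 : 1 / (n:ℝ) * (1 / (n:ℝ)) ≤ Sf L y * Sf L y' :=
          mul_le_mul h3 h4 (by positivity) hS.le
        have h7 : |y' v| * |Sf L y' - Sf L y| ≤ 2 * n * d := by
          calc |y' v| * |Sf L y' - Sf L y| ≤ 1 * (2 * n * d) :=
                mul_le_mul h1 h2 (abs_nonneg _) zero_le_one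
          _ = 2 * n * d := one_mul _
        have h9 : 2*(n:ℝ)^3*d * (1/(n:ℝ) * (1/(n:ℝ))) ≤
            2*(n:ℝ)^3*d * (Sf L y * Sf L y') :=
          mul_le_mul_of_nonneg_left h6 (by positivity)
        have hn0 : (n:ℝ) ≠ 0 := by linarith
        have h10 : 2*(n:ℝ)^3*d * (1/(n:ℝ) * (1/(n:ℝ))) = 2*n*d := by
          field_simp
        linarith
      linarith
    · rw [Qf, Qf, if_neg hvL, if_neg hvL, sub_zero, abs_zero]
      positivity
  have hQb : Qf L y v ≤ n := by
    refine le_trans (Qf_le h v) ?_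
    rw [div_le_iff₀ hS]
    have := h.kp.le_one v
    have := h.kp.nonneg v
    nlinarith
  have hQb' : Qf L y' v ≤ n := by
    refine le_trans (Qf_le h' v) ?_
    rw [div_le_iff₀ hS']
    have := h'.kp.le_one v
    have := h'.kp.nonneg v
    nlinarith
  have hQ0 : 0 ≤ Qf L y v := Qf_nonneg h v
  have hQ0' : 0 ≤ Qf L y' v := Qf_nonneg h' v
  have hkey : Pf L τ y v - Pf L τ' y' v =
      (1 - τ) * (y v - y' v) + (τ' - τ) * y' v +
      (τ * (Qf L y v - Qf L y' v) + (τ - τ') * Qf L y' v) := by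
    rw [Pf, Pf]; ring
  rw [hkey]
  have h1 : |(1 - τ) * (y v - y' v)| ≤ d := by
    rw [abs_mul]
    have ha : |1 - τ| ≤ 1 := by rw [abs_le]; constructor <;> linarith
    have := hdiff v
    nlinarith [abs_nonneg (y v - y' v)]
  have h2 : |(τ' - τ) * y' v| ≤ |τ - τ'| := by
    rw [abs_mul, abs_sub_comm]
    have ha : |y' v| ≤ 1 := by
      rw [abs_of_nonneg (h'.kp.nonneg v)]; exact h'.kp.le_one v
    nlinarith [abs_nonneg (τ - τ')]
  have h3 : |τ * (Qf L y v - Qf L y' v)| ≤ (n:ℝ) * d + 2 * (n:ℝ)^3 * d := by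
    rw [abs_mul, abs_of_nonneg hτ0]
    nlinarith [abs_nonneg (Qf L y v - Qf L y' v)]
  have h4 : |(τ - τ') * Qf L y' v| ≤ (n:ℝ) * |τ - τ'| := by
    rw [abs_mul]
    have ha : |Qf L y' v| ≤ n := by rw [abs_of_nonneg hQ0']; exact hQb'
    nlinarith [abs_nonneg (τ - τ')]
  have habs := abs_nonneg (τ - τ')
  calc |(1 - τ) * (y v - y' v) + (τ' - τ) * y' v +
      (τ * (Qf L y v - Qf L y' v) + (τ - τ') * Qf L y' v)|
      ≤ |(1 - τ) * (y v - y' v) + (τ' - τ) * y' v| +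
        |τ * (Qf L y v - Qf L y' v) + (τ - τ') * Qf L y' v| := abs_add_le _ _
  _ ≤ (|(1 - τ) * (y v - y' v)| + |(τ' - τ) * y' v|) +
      (|τ * (Qf L y v - Qf L y' v)| + |(τ - τ') * Qf L y' v|) :=
    add_le_add (abs_add_le _ _) (abs_add_le _ _)
  _ ≤ (2*(n:ℝ)^3 + 2*n + 2) * (|τ - τ'| + d) := by
    have hc1 : (0:ℝ) ≤ (n:ℝ)^3 * |τ - τ'| := by positivity
    have hc2 : (0:ℝ) ≤ (n:ℝ)^3 * d := by positivity
    have hc3 : (0:ℝ) ≤ (n:ℝ) * |τ - τ'| := by positivity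
    have hc4 : (0:ℝ) ≤ (n:ℝ) * d := by positivity
    nlinarith

theorem Gf_est {t t' : Finset V} {y y' : V → ℝ} {n : ℕ} {d : ℝ}
    (h : KPt K t y) (h' : KPt K t' y') (hd : 0 ≤ d)
    (hcard : t.card ≤ n) (hcard' : t'.card ≤ n)
    (hdiff : ∀ v, |y v - y' v| ≤ d) (s : Finset V) :
    |Gf y s - Gf y' s| ≤ 2 * n * d := by
  have hnn : (0:ℝ) ≤ 2 * n * d := by positivity
  by_cases h0 : Gf y s = 0 ∧ Gf y' s = 0
  · rw [h0.1, h0.2, sub_zero, abs_zero]; exact hnn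
  -- in the remaining case the relevant set is small
  have hcards : s.Nonempty ∧ (s.card : ℝ) ≤ n := by
    rcases not_and_or.1 h0 with hne | hne
    · obtain ⟨hsne, hlt⟩ := Gf_pos_struct h hne
      have hsub : s ⊆ t := by
        intro v hv
        have hN0 : 0 ≤ Nf y s := Nf_nonneg h.nonneg h.le_one
        have : 0 < y v := lt_of_le_of_lt hN0 (lt_of_lt_of_le hlt (mf_le hv))
        by_contra hvt
        rw [h.zero v hvt] at this
        norm_num at this
      exact ⟨hsne, by exact_mod_cast le_trans (Finset.card_le_card hsub) hcard⟩
    · obtain ⟨hsne, hlt⟩ := Gf_pos_struct h' hne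
      have hsub : s ⊆ t' := by
        intro v hv
        have hN0 : 0 ≤ Nf y' s := Nf_nonneg h'.nonneg h'.le_one
        have : 0 < y' v := lt_of_le_of_lt hN0 (lt_of_lt_of_le hlt (mf_le hv))
        by_contra hvt
        rw [h'.zero v hvt] at this
        norm_num at this
      exact ⟨hsne, by exact_mod_cast le_trans (Finset.card_le_card hsub) hcard'⟩
  obtain ⟨hsne, hcardle⟩ := hcards
  have hmax : |max (mf y s - Nf y s) 0 - max (mf y' s - Nf y' s) 0| ≤ 2 * d := by
    have h1 := abs_max_sub_max_le_max (mf y s - Nf y s) 0 (mf y' s - Nf y' s) 0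
    rw [sub_self, abs_zero] at h1
    have h2 : max |mf y s - Nf y s - (mf y' s - Nf y' s)| 0 =
        |mf y s - Nf y s - (mf y' s - Nf y' s)| := max_eq_left (abs_nonneg _)
    rw [h2] at h1
    refine le_trans h1 ?_
    have h3 : mf y s - Nf y s - (mf y' s - Nf y' s) =
        (mf y s - mf y' s) - (Nf y s - Nf y' s) := by ring
    rw [h3]
    refine le_trans (abs_sub _ _) ?_
    have h4 := abs_mf_sub_mf_le (y := y) (y' := y') hsne hd hdiff
    have h5 := abs_Nf_sub_Nf_le (y := y) (y' := y') (s := s) (M := 1) hd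
      h.nonneg h'.nonneg h.le_one h'.le_one hdiff
    linarith
  rw [Gf, Gf, ← mul_sub, abs_mul, abs_of_nonneg (by positivity : (0:ℝ) ≤ (s.card:ℝ))]
  nlinarith [abs_nonneg (max (mf y s - Nf y s) 0 - max (mf y' s - Nf y' s) 0)]

end Estimates

section Glue

theorem CPt.le_one {K L : ASC V} {c : Finset (Finset V)} {x : Finset V → ℝ}
    (hc : CPt K L c x) (s : Finset V) : x s ≤ 1 := by
  by_cases hsc : s ∈ c
  · calc x s ≤ ∑ i ∈ c, x i := Finset.single_le_sum (fun i _ => hc.nonneg i) hsc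
    _ = 1 := hc.sum
  · rw [hc.zero s hsc]; norm_num

theorem memℓp_infty_of_bound {α : Type} {f : α → ℝ} {M : ℝ}
    (h : ∀ i, |f i| ≤ M) : Memℓp f ∞ :=
  memℓp_infty ⟨M, by rintro r ⟨i, rfl⟩; simpa [Real.norm_eq_abs] using h i⟩

theorem coord_le_dist {α : Type} (f g : lp (fun _ : α => ℝ) ∞) (i : α) :
    |f i - g i| ≤ dist f g := by
  rw [dist_eq_norm]
  have := lp.norm_apply_le_norm (E := fun _ : α => ℝ) ENNReal.top_ne_zero (f - g) i
  rw [lp.coeFn_sub] at this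
  simpa [Real.norm_eq_abs] using this

theorem dist_le_of_coord {α : Type} (f g : lp (fun _ : α => ℝ) ∞) {M : ℝ}
    (hM : 0 ≤ M) (h : ∀ i, |f i - g i| ≤ M) : dist f g ≤ M := by
  rw [dist_eq_norm]
  refine lp.norm_le_of_forall_le hM (fun i => ?_)
  rw [lp.coeFn_sub]
  simpa [Real.norm_eq_abs] using h i

end Glue


end Aux

/-- If `L` is a full subcomplex of a locally finite-dimensional simplicial complex
`K`, then `bst L` is homotopy equivalent to `L`. -/
theorem bst_homotopyEquiv {V : Type} (K L : ASC V)
    (hK : LocFinDim K) (hL : IsFullSub K L) :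
    Nonempty (ContinuousMap.HomotopyEquiv (realization (bstC K L)) (realization L)) := by
  classical
  -- extraction of support data
  have hCPt : ∀ x : ↥(realization (bstC K L)),
      ∃ c, CPt K L c ⇑(x : lp (fun _ : Finset V => ℝ) ∞) := by
    intro x
    obtain ⟨c, hc1, hc2, hc3, hc4⟩ := x.2
    exact ⟨c, ⟨hc1, hc2, hc3, hc4⟩⟩
  have hKPtL : ∀ y : ↥(realization L), ∃ s, KPt L s ⇑(y : lp (fun _ : V => ℝ) ∞) := by
    intro y
    obtain ⟨s, h1, h2, h3, h4⟩ := y.2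
    exact ⟨s, ⟨h1, h2, h3, h4⟩⟩
  -- packaging of membership
  have hmem_of_CPt : ∀ (f : Finset V → ℝ) (hm : Memℓp f ∞) (c : Finset (Finset V)),
      CPt K L c f → (⟨f, hm⟩ : lp (fun _ : Finset V => ℝ) ∞) ∈ realization (bstC K L) :=
    fun f hm c hc => ⟨c, hc.facebst, hc.nonneg, hc.zero, hc.sum⟩
  have hmem_of_KPtL : ∀ (f : V → ℝ) (hm : Memℓp f ∞) (s : Finset V),
      KPt L s f → (⟨f, hm⟩ : lp (fun _ : V => ℝ) ∞) ∈ realization L :=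
    fun f hm s hs => ⟨s, hs.face, hs.nonneg, hs.zero, hs.sum⟩
  -- values of the homotopy lie in `|bst L|`
  have hHmem : ∀ (τ : ℝ), 0 ≤ τ → τ ≤ 1 → ∀ x : ↥(realization (bstC K L)),
      ∃ cH, CPt K L cH (Gf (Pf L τ (Bf ⇑(x : lp (fun _ : Finset V => ℝ) ∞)))) := by
    intro τ h0 h1 x
    obtain ⟨c, hc⟩ := hCPt x
    obtain ⟨T, hTc, hT⟩ := DPt_Bf hc
    exact ⟨_, CPt_Gf (DPt_Pf hT h0 h1)⟩
  have hHml : ∀ (τ : ℝ), 0 ≤ τ → τ ≤ 1 → ∀ x : ↥(realization (bstC K L)),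
      Memℓp (Gf (Pf L τ (Bf ⇑(x : lp (fun _ : Finset V => ℝ) ∞)))) ∞ := by
    intro τ h0 h1 x
    obtain ⟨cH, hcH⟩ := hHmem τ h0 h1 x
    refine memℓp_infty_of_bound (M := 1) (fun s => ?_)
    rw [abs_of_nonneg (hcH.nonneg s)]
    exact hcH.le_one s
  -- values of the forward map lie in `|L|`
  have hFkpt : ∀ x : ↥(realization (bstC K L)),
      ∃ sF, KPt L sF (Pf L 1 (Bf ⇑(x : lp (fun _ : Finset V => ℝ) ∞))) := by
    intro x
    obtain ⟨c, hc⟩ := hCPt x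
    obtain ⟨T, hTc, hT⟩ := DPt_Bf hc
    exact ⟨_, KPt_L_Pf_one hL hT⟩
  have hFml : ∀ x : ↥(realization (bstC K L)),
      Memℓp (Pf L 1 (Bf ⇑(x : lp (fun _ : Finset V => ℝ) ∞))) ∞ := by
    intro x
    obtain ⟨sF, hsF⟩ := hFkpt x
    refine memℓp_infty_of_bound (M := 1) (fun v => ?_)
    rw [abs_of_nonneg (hsF.nonneg v)]
    exact hsF.le_one v
  -- values of the backward map lie in `|bst L|`
  have hGcpt : ∀ y : ↥(realization L),
      ∃ cG, CPt K L cG (Gf ⇑(y : lp (fun _ : V => ℝ) ∞)) := by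
    intro y
    obtain ⟨s, hs⟩ := hKPtL y
    exact ⟨_, CPt_Gf (DPt_of_KPt_L hL hs)⟩
  have hGml : ∀ y : ↥(realization L), Memℓp (Gf ⇑(y : lp (fun _ : V => ℝ) ∞)) ∞ := by
    intro y
    obtain ⟨cG, hcG⟩ := hGcpt y
    refine memℓp_infty_of_bound (M := 1) (fun s => ?_)
    rw [abs_of_nonneg (hcG.nonneg s)]
    exact hcG.le_one s
  -- the maps
  let FF : ↥(realization (bstC K L)) → ↥(realization L) := fun x =>
    ⟨⟨Pf L 1 (Bf ⇑(x : lp (fun _ : Finset V => ℝ) ∞)), hFml x⟩,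
      hmem_of_KPtL _ _ _ (hFkpt x).choose_spec⟩
  let GG : ↥(realization L) → ↥(realization (bstC K L)) := fun y =>
    ⟨⟨Gf ⇑(y : lp (fun _ : V => ℝ) ∞), hGml y⟩,
      hmem_of_CPt _ _ _ (hGcpt y).choose_spec⟩
  let HF : ↥unitInterval × ↥(realization (bstC K L)) → ↥(realization (bstC K L)) :=
    fun p => ⟨⟨Gf (Pf L ↑p.1 (Bf ⇑(p.2 : lp (fun _ : Finset V => ℝ) ∞))),
        hHml ↑p.1 p.1.2.1 p.1.2.2 p.2⟩,
      hmem_of_CPt _ _ _ (hHmem ↑p.1 p.1.2.1 p.1.2.2 p.2).choose_spec⟩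
  -- algebraic identities
  have hFG : ∀ y : ↥(realization L), FF (GG y) = y := by
    intro y
    obtain ⟨s, hs⟩ := hKPtL y
    refine Subtype.ext (lp.ext ?_)
    show Pf L 1 (Bf (Gf ⇑(y : lp (fun _ : V => ℝ) ∞))) = _
    rw [Bf_Gf (DPt_of_KPt_L hL hs).kp, Pf_eq_self hs]
  have hH0 : ∀ x : ↥(realization (bstC K L)), HF (0, x) = x := by
    intro x
    obtain ⟨c, hc⟩ := hCPt x
    refine Subtype.ext (lp.ext ?_)
    show Gf (Pf L ((0 : ↥unitInterval) : ℝ) (Bf ⇑(x : lp (fun _ : Finset V => ℝ) ∞))) = _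
    have h0 : ((0 : ↥unitInterval) : ℝ) = 0 := rfl
    rw [h0, Pf_zero, Gf_Bf hc]
  have hH1 : ∀ x : ↥(realization (bstC K L)), HF (1, x) = GG (FF x) := by
    intro x
    refine Subtype.ext (lp.ext ?_)
    show Gf (Pf L ((1 : ↥unitInterval) : ℝ) (Bf ⇑(x : lp (fun _ : Finset V => ℝ) ∞))) = _
    have h1 : ((1 : ↥unitInterval) : ℝ) = 1 := rfl
    rw [h1]
  -- local cardinality bounds
  have hloc : ∀ x : ↥(realization (bstC K L)), ∃ N : ℕ, 1 ≤ N ∧ ∃ δ₁ : ℝ, 0 < δ₁ ∧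
      ∀ x' : ↥(realization (bstC K L)), dist x' x < δ₁ →
        ∃ c', CPt K L c' ⇑(x' : lp (fun _ : Finset V => ℝ) ∞) ∧
          ∀ i ∈ c', i.card ≤ N := by
    intro x
    obtain ⟨c, hc⟩ := hCPt x
    obtain ⟨s₀, hs₀⟩ := hc.cposSupp_nonempty
    have hs₀c : s₀ ∈ c := Finset.filter_subset _ _ hs₀
    have hs₀pos : 0 < (x : lp (fun _ : Finset V => ℝ) ∞) s₀ := (Finset.mem_filter.1 hs₀).2
    obtain ⟨u, hu⟩ := K.nonempty_of_mem s₀ (hc.mem_faces hs₀c)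
    have huK : ({u} : Finset V) ∈ K.faces :=
      K.down_closed s₀ (hc.mem_faces hs₀c) {u} (Finset.singleton_subset_iff.2 hu)
        (Finset.singleton_nonempty u)
    obtain ⟨nu, hnu⟩ := hK u huK
    refine ⟨max (max s₀.card nu) 1, le_max_right _ _,
      (x : lp (fun _ : Finset V => ℝ) ∞) s₀, hs₀pos, ?_⟩
    intro x' hx'
    obtain ⟨c', hc'⟩ := hCPt x'
    have hcoord : |(x' : lp (fun _ : Finset V => ℝ) ∞) s₀ -
        (x : lp (fun _ : Finset V => ℝ) ∞) s₀| ≤ dist x' x := by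
      have h9 := coord_le_dist (x' : lp (fun _ : Finset V => ℝ) ∞)
        (x : lp (fun _ : Finset V => ℝ) ∞) s₀
      rwa [← Subtype.dist_eq] at h9
    have hx's₀ : 0 < (x' : lp (fun _ : Finset V => ℝ) ∞) s₀ := by
      have h9 := (abs_le.1 hcoord).1
      linarith
    have hs₀c' : s₀ ∈ c' := by
      by_contra hcon
      rw [hc'.zero s₀ hcon] at hx's₀
      norm_num at hx's₀
    refine ⟨c', hc', fun i hi => ?_⟩
    rcases eq_or_ne i s₀ with rfl | hne
    · exact le_trans (le_trans (le_max_left _ nu) (le_max_left _ 1)) le_rfl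
    · rcases hc'.chain (Finset.mem_coe.2 hi) (Finset.mem_coe.2 hs₀c') hne with hsub | hsub
      · exact le_trans (le_trans (Finset.card_le_card hsub) (le_max_left s₀.card nu))
          (le_max_left _ 1)
      · exact le_trans (le_trans (hnu i (hc'.mem_faces hi) (hsub hu))
          (le_max_right s₀.card nu)) (le_max_left _ 1)
  -- the master local estimate
  have hmaster : ∀ x : ↥(realization (bstC K L)), ∃ N : ℕ, 1 ≤ N ∧ ∃ δ₁ : ℝ, 0 < δ₁ ∧
      ∀ (τ τ' : ℝ), 0 ≤ τ → τ ≤ 1 → 0 ≤ τ' → τ' ≤ 1 →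
        ∀ x' : ↥(realization (bstC K L)), dist x' x < δ₁ →
        (∀ v, |Pf L τ (Bf ⇑(x : lp (fun _ : Finset V => ℝ) ∞)) v -
            Pf L τ' (Bf ⇑(x' : lp (fun _ : Finset V => ℝ) ∞)) v| ≤
          ((2*(N:ℝ)^3+2*N+2)*(2*N+1)) * (|τ - τ'| + dist x' x)) ∧
        (∀ s, |Gf (Pf L τ (Bf ⇑(x : lp (fun _ : Finset V => ℝ) ∞))) s -
            Gf (Pf L τ' (Bf ⇑(x' : lp (fun _ : Finset V => ℝ) ∞))) s| ≤
          2 * (N:ℝ) * (((2*(N:ℝ)^3+2*N+2)*(2*N+1)) * (|τ - τ'| + dist x' x))) := by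
    intro x
    obtain ⟨N, hN1, δ₁, hδ₁, hpack⟩ := hloc x
    refine ⟨N, hN1, δ₁, hδ₁, ?_⟩
    intro τ τ' hτ0 hτ1 hτ0' hτ1' x' hx'
    obtain ⟨c, hc, hcard⟩ := hpack x (by rw [dist_self]; exact hδ₁)
    obtain ⟨c', hc', hcard'⟩ := hpack x' hx'
    have hd : (0:ℝ) ≤ dist x' x := dist_nonneg
    have hdiff : ∀ s, |(x : lp (fun _ : Finset V => ℝ) ∞) s -
        (x' : lp (fun _ : Finset V => ℝ) ∞) s| ≤ dist x' x := by
      intro s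
      rw [abs_sub_comm]
      have h9 := coord_le_dist (x' : lp (fun _ : Finset V => ℝ) ∞)
        (x : lp (fun _ : Finset V => ℝ) ∞) s
      rwa [← Subtype.dist_eq] at h9
    have hB := Bf_est hc hc' hd hcard hcard' hdiff
    obtain ⟨T, hTc, hT⟩ := DPt_Bf hc
    obtain ⟨T', hT'c, hT'⟩ := DPt_Bf hc'
    have hTcard := hcard T hTc
    have hT'card := hcard' T' hT'c
    have hBd : (0:ℝ) ≤ 2*(N:ℝ)*(dist x' x) := by positivity
    have hP := Pf_est (L := L) hT hT' hBd hN1 hTcard hT'card hτ0 hτ1 hτ0' hτ1' hB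
    have hNR : (1:ℝ) ≤ N := by exact_mod_cast hN1
    have hfac : (2*(N:ℝ)^3+2*N+2) * (|τ - τ'| + 2*N*dist x' x) ≤
        ((2*(N:ℝ)^3+2*N+2)*(2*N+1)) * (|τ - τ'| + dist x' x) := by
      have h1 : |τ - τ'| + 2*N*dist x' x ≤ (2*N+1) * (|τ - τ'| + dist x' x) := by
        nlinarith [abs_nonneg (τ - τ')]
      have h2 : (0:ℝ) ≤ 2*(N:ℝ)^3+2*N+2 := by positivity
      calc (2*(N:ℝ)^3+2*N+2) * (|τ - τ'| + 2*N*dist x' x)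
          ≤ (2*(N:ℝ)^3+2*N+2) * ((2*N+1) * (|τ - τ'| + dist x' x)) :=
            mul_le_mul_of_nonneg_left h1 h2
      _ = ((2*(N:ℝ)^3+2*N+2)*(2*N+1)) * (|τ - τ'| + dist x' x) := by ring
    have hPf : ∀ v, |Pf L τ (Bf ⇑(x : lp (fun _ : Finset V => ℝ) ∞)) v -
        Pf L τ' (Bf ⇑(x' : lp (fun _ : Finset V => ℝ) ∞)) v| ≤
        ((2*(N:ℝ)^3+2*N+2)*(2*N+1)) * (|τ - τ'| + dist x' x) :=
      fun v => le_trans (hP v) hfac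
    refine ⟨hPf, fun s => ?_⟩
    have hz := (DPt_Pf hT hτ0 hτ1).kp
    have hz' := (DPt_Pf hT' hτ0' hτ1').kp
    have hd2 : (0:ℝ) ≤ ((2*(N:ℝ)^3+2*N+2)*(2*N+1)) * (|τ - τ'| + dist x' x) := by
      positivity
    exact Gf_est hz hz' hd2 hTcard hT'card hPf s
  -- local estimate for the backward map
  have hmasterG : ∀ y : ↥(realization L), ∃ N : ℕ, ∃ δ₁ : ℝ, 0 < δ₁ ∧
      ∀ y' : ↥(realization L), dist y' y < δ₁ →
        ∀ s, |Gf ⇑(y : lp (fun _ : V => ℝ) ∞) s - Gf ⇑(y' : lp (fun _ : V => ℝ) ∞) s| ≤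
          2 * (N:ℝ) * dist y' y := by
    intro y
    obtain ⟨s, hs⟩ := hKPtL y
    obtain ⟨v₁, hv₁s, hv₁pos⟩ := hs.exists_pos
    have hv₁L : ({v₁} : Finset V) ∈ L.faces :=
      L.down_closed s hs.face {v₁} (Finset.singleton_subset_iff.2 hv₁s)
        (Finset.singleton_nonempty v₁)
    obtain ⟨n₁, hn₁⟩ := hK v₁ (hL.1 hv₁L)
    refine ⟨n₁, (y : lp (fun _ : V => ℝ) ∞) v₁, hv₁pos, ?_⟩
    intro y' hy' sarg
    obtain ⟨s', hs'⟩ := hKPtL y'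
    have hcoord : |(y' : lp (fun _ : V => ℝ) ∞) v₁ -
        (y : lp (fun _ : V => ℝ) ∞) v₁| ≤ dist y' y := by
      have h9 := coord_le_dist (y' : lp (fun _ : V => ℝ) ∞)
        (y : lp (fun _ : V => ℝ) ∞) v₁
      rwa [← Subtype.dist_eq] at h9
    have hy'v₁ : 0 < (y' : lp (fun _ : V => ℝ) ∞) v₁ := by
      have h9 := (abs_le.1 hcoord).1
      linarith
    have hv₁s' : v₁ ∈ s' := by
      by_contra hcon
      rw [hs'.zero v₁ hcon] at hy'v₁
      norm_num at hy'v₁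
    have hscard : s.card ≤ n₁ := hn₁ s (hL.1 hs.face) hv₁s
    have hs'card : s'.card ≤ n₁ := hn₁ s' (hL.1 hs'.face) hv₁s'
    have hdiff : ∀ v, |(y : lp (fun _ : V => ℝ) ∞) v -
        (y' : lp (fun _ : V => ℝ) ∞) v| ≤ dist y' y := by
      intro v
      rw [abs_sub_comm]
      have h9 := coord_le_dist (y' : lp (fun _ : V => ℝ) ∞)
        (y : lp (fun _ : V => ℝ) ∞) v
      rwa [← Subtype.dist_eq] at h9
    exact Gf_est (DPt_of_KPt_L hL hs).kp (DPt_of_KPt_L hL hs').kp dist_nonneg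
      hscard hs'card hdiff sarg
  -- continuity of the forward map
  have hFFcont : Continuous FF := by
    rw [Metric.continuous_iff]
    intro x ε hε
    obtain ⟨N, hN1, δ₁, hδ₁, hms⟩ := hmaster x
    have hCpos : (0:ℝ) < (2*(N:ℝ)^3+2*N+2)*(2*N+1) := by positivity
    set C := (2*(N:ℝ)^3+2*N+2)*(2*N+1) with hCdef
    refine ⟨min δ₁ (ε / (C+1)), by positivity, ?_⟩
    intro x' hx'
    have hx'δ₁ : dist x' x < δ₁ := lt_of_lt_of_le hx' (min_le_left _ _)
    have h1 := (hms 1 1 zero_le_one le_rfl zero_le_one le_rfl x' hx'δ₁).1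
    have hdistle : dist (FF x') (FF x) ≤ C * (|(1:ℝ) - 1| + dist x' x) := by
      rw [Subtype.dist_eq]
      refine dist_le_of_coord _ _ (by positivity) (fun v => ?_)
      rw [abs_sub_comm]
      exact h1 v
    have habs : |(1:ℝ) - 1| = 0 := by norm_num
    rw [habs] at hdistle
    have hx'ε : dist x' x < ε / (C+1) := lt_of_lt_of_le hx' (min_le_right _ _)
    have : C * (0 + dist x' x) < ε := by
      rw [zero_add]
      have h9 : C * dist x' x < C * (ε / (C+1)) ∨ dist x' x = 0 := by
        rcases eq_or_lt_of_le (dist_nonneg : (0:ℝ) ≤ dist x' x) with h | h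
        · exact Or.inr h.symm
        · exact Or.inl (by exact mul_lt_mul_of_pos_left hx'ε hCpos)
      rcases h9 with h9 | h9
      · have h10 : C * (ε / (C+1)) < ε := by
          have h11 : C * (ε / (C+1)) = C * ε / (C+1) := by ring
          rw [h11, div_lt_iff₀ (by linarith : (0:ℝ) < C+1)]
          nlinarith
        linarith
      · rw [h9, mul_zero]
        exact hε
    linarith
  -- continuity of the backward map
  have hGGcont : Continuous GG := by
    rw [Metric.continuous_iff]
    intro y ε hε
    obtain ⟨N, δ₁, hδ₁, hms⟩ := hmasterG y
    refine ⟨min δ₁ (ε / (2*N+1)), by positivity, ?_⟩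
    intro y' hy'
    have hy'δ₁ : dist y' y < δ₁ := lt_of_lt_of_le hy' (min_le_left _ _)
    have h1 := hms y' hy'δ₁
    have hdistle : dist (GG y') (GG y) ≤ 2 * (N:ℝ) * dist y' y := by
      rw [Subtype.dist_eq]
      refine dist_le_of_coord _ _ (by positivity) (fun s => ?_)
      rw [abs_sub_comm]
      exact h1 s
    have hy'ε : dist y' y < ε / (2*N+1) := lt_of_lt_of_le hy' (min_le_right _ _)
    have hNpos : (0:ℝ) < 2*(N:ℝ)+1 := by positivity
    have : 2 * (N:ℝ) * dist y' y < ε := by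
      rcases eq_or_lt_of_le (dist_nonneg : (0:ℝ) ≤ dist y' y) with h | h
      · rw [← h, mul_zero]; exact hε
      · have h9 : 2 * (N:ℝ) * dist y' y < 2 * (N:ℝ) * (ε / (2*N+1)) ∨ (N:ℝ) = 0 := by
          rcases eq_or_lt_of_le (Nat.cast_nonneg (α := ℝ) N) with hN | hN
          · exact Or.inr hN.symm
          · exact Or.inl (mul_lt_mul_of_pos_left hy'ε (by linarith))
        rcases h9 with h9 | h9
        · have h10 : 2 * (N:ℝ) * (ε / (2*N+1)) ≤ ε := by
            have h11 : 2 * (N:ℝ) * (ε / (2*N+1)) = 2 * (N:ℝ) * ε / (2*N+1) := by ring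
            rw [h11, div_le_iff₀ hNpos]
            nlinarith
          linarith
        · rw [h9] at *
          norm_num at h1 ⊢
          linarith [hdistle]
    linarith
  -- continuity of the homotopy
  have hHFcont : Continuous HF := by
    rw [Metric.continuous_iff]
    intro p ε hε
    obtain ⟨N, hN1, δ₁, hδ₁, hms⟩ := hmaster p.2
    have hCpos : (0:ℝ) < 2*(N:ℝ)*((2*(N:ℝ)^3+2*N+2)*(2*N+1)) := by positivity
    set C := 2*(N:ℝ)*((2*(N:ℝ)^3+2*N+2)*(2*N+1)) with hCdef
    refine ⟨min δ₁ (ε / (2*C+1)), by positivity, ?_⟩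
    intro p' hp'
    have hd2 : dist p'.2 p.2 ≤ dist p' p := by
      rw [Prod.dist_eq]
      exact le_max_right _ _
    have hd1 : dist p'.1 p.1 ≤ dist p' p := by
      rw [Prod.dist_eq]
      exact le_max_left _ _
    have hp'δ₁ : dist p'.2 p.2 < δ₁ :=
      lt_of_le_of_lt hd2 (lt_of_lt_of_le hp' (min_le_left _ _))
    have h1 := (hms ↑p.1 ↑p'.1 p.1.2.1 p.1.2.2 p'.1.2.1 p'.1.2.2 p'.2 hp'δ₁).2
    have hτd : |(↑p.1 : ℝ) - ↑p'.1| = dist p'.1 p.1 := by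
      rw [Subtype.dist_eq, Real.dist_eq, abs_sub_comm]
    have hdistle : dist (HF p') (HF p) ≤ C * (|(↑p.1 : ℝ) - ↑p'.1| + dist p'.2 p.2) := by
      rw [Subtype.dist_eq]
      refine dist_le_of_coord _ _ (by positivity) (fun s => ?_)
      rw [abs_sub_comm]
      exact le_trans (h1 s) (le_of_eq (by ring))
    have hbound : |(↑p.1 : ℝ) - ↑p'.1| + dist p'.2 p.2 ≤ 2 * dist p' p := by
      rw [hτd]
      linarith
    have hfinal : dist (HF p') (HF p) ≤ C * (2 * dist p' p) := by
      refine le_trans hdistle (mul_le_mul_of_nonneg_left hbound hCpos.le)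
    have hp'ε : dist p' p < ε / (2*C+1) := lt_of_lt_of_le hp' (min_le_right _ _)
    have : C * (2 * dist p' p) < ε := by
      have h9 : C * (2 * dist p' p) ≤ 2*C * (ε / (2*C+1)) := by
        have := dist_nonneg (x := p') (y := p)
        nlinarith
      have h10 : 2*C * (ε / (2*C+1)) < ε := by
        have h11 : 2*C * (ε / (2*C+1)) = 2*C*ε / (2*C+1) := by ring
        rw [h11, div_lt_iff₀ (by linarith : (0:ℝ) < 2*C+1)]
        nlinarith
      linarith
    linarith
  -- assemble the homotopy equivalence
  let fC : C(↥(realization (bstC K L)), ↥(realization L)) := ⟨FF, hFFcont⟩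
  let gC : C(↥(realization L), ↥(realization (bstC K L))) := ⟨GG, hGGcont⟩
  have hHomotopy : ContinuousMap.Homotopy
      (ContinuousMap.id ↥(realization (bstC K L))) (gC.comp fC) :=
    { toFun := HF
      continuous_toFun := hHFcont
      map_zero_left := fun x => hH0 x
      map_one_left := fun x => hH1 x }
  refine ⟨⟨fC, gC, ⟨hHomotopy.symm⟩, ?_⟩⟩
  have hcomp : fC.comp gC = ContinuousMap.id _ := ContinuousMap.ext hFG
  rw [hcomp]

end NobelingPaper
end
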